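/- arXiv:2005.14519 — 9 statements merged into one kernel-verified Lean document; each statement's English description precedes it below -/
import Mathlib

section
/- Let A = {a_1,...,a_n} be a B_t[N;1] set in Z_N. In the group G = Z_N × Z_{2t+1}, let S = {(a_i, 1) : 1 ≤ i ≤ n}. Then M = {-1, 1} partially t-splits G with splitter set S; that is, the elements e·((a_1,1),...,(a_n,1)) for e ∈ {-1,0,1}^n with 1 ≤ wt(e) ≤ t are pairwise distinct and nonzero in G. -/
/-- Hamming weight of a vector. -/
def wt {n : ℕ} {α : Type*} [Zero α] [DecidableEq α] (e : Fin n → α) : ℕ :=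
  (Finset.univ.filter fun i => e i ≠ 0).card

/-- `A ⊆ ℤ_N` is a `B_t[N;1]` set: sums of any `t` not-necessarily-distinct
elements of `A` are all distinct modulo `N`. -/
def IsBtSet (N t : ℕ) (A : Set (ZMod N)) : Prop :=
  ∀ m m' : Multiset (ZMod N), Multiset.card m = t → Multiset.card m' = t →
    (∀ x ∈ m, x ∈ A) → (∀ x ∈ m', x ∈ A) → m.sum = m'.sum → m = m'

section Aux

variable {n : ℕ}

private def Pe (e : Fin n → ℤ) : Finset (Fin n) := Finset.univ.filter fun i => e i = 1
private def Me (e : Fin n → ℤ) : Finset (Fin n) := Finset.univ.filter fun i => e i = -1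

private lemma count_val {α : Type*} [DecidableEq α] (s : Finset α) (x : α) :
    Multiset.count x s.val = if x ∈ s then 1 else 0 := by
  split
  · exact Multiset.count_eq_one_of_mem s.nodup ‹_›
  · exact Multiset.count_eq_zero_of_notMem ‹_›

private lemma wt_eq (e : Fin n → ℤ) (he : ∀ i, e i = -1 ∨ e i = 0 ∨ e i = 1) :
    wt e = (Pe e).card + (Me e).card := by
  have h1 : (Finset.univ.filter fun i => e i ≠ 0) = Pe e ∪ Me e := by
    ext i
    simp only [Pe, Me, Finset.mem_filter, Finset.mem_union, Finset.mem_univ, true_and]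
    rcases he i with h | h | h <;> simp [h]
  rw [wt, h1, Finset.card_union_of_disjoint]
  simp only [Pe, Me]
  rw [Finset.disjoint_filter]
  intro i _ h1 h2
  omega

private lemma sumZ_eq (e : Fin n → ℤ) (he : ∀ i, e i = -1 ∨ e i = 0 ∨ e i = 1) :
    (∑ i, e i) = ((Pe e).card : ℤ) - (Me e).card := by
  have : ∀ i, e i = (if e i = 1 then (1:ℤ) else 0) - (if e i = -1 then (1:ℤ) else 0) := by
    intro i; rcases he i with h | h | h <;> simp [h]
  rw [Finset.sum_congr rfl fun i _ => this i, Finset.sum_sub_distrib,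
    Finset.sum_boole, Finset.sum_boole]
  rfl

private lemma sumA_eq {N : ℕ} (a : Fin n → ZMod N) (e : Fin n → ℤ)
    (he : ∀ i, e i = -1 ∨ e i = 0 ∨ e i = 1) :
    (∑ i, e i • a i) = (∑ i ∈ Pe e, a i) - ∑ i ∈ Me e, a i := by
  have : ∀ i, e i • a i =
      (if e i = 1 then a i else 0) - (if e i = -1 then a i else 0) := by
    intro i; rcases he i with h | h | h <;> simp [h]
  rw [Finset.sum_congr rfl fun i _ => this i, Finset.sum_sub_distrib,
    ← Finset.sum_filter, ← Finset.sum_filter]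
  rfl

private lemma abs_sum_le (e : Fin n → ℤ) (he : ∀ i, e i = -1 ∨ e i = 0 ∨ e i = 1) :
    |∑ i, e i| ≤ (wt e : ℤ) := by
  calc |∑ i, e i| ≤ ∑ i, |e i| := Finset.abs_sum_le_sum_abs _ _
    _ ≤ ∑ i : Fin n, (if e i ≠ 0 then (1:ℤ) else 0) := by
        apply Finset.sum_le_sum
        intro i _
        rcases he i with h | h | h <;> simp [h]
    _ = (wt e : ℤ) := by rw [Finset.sum_boole]; rfl

end Aux

theorem stmt1 (N t n : ℕ) (a : Fin n → ZMod N) (ha : Function.Injective a)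
    (hA : IsBtSet N t (Set.range a)) :
    (∀ e : Fin n → ℤ, (∀ i, e i = -1 ∨ e i = 0 ∨ e i = 1) → 1 ≤ wt e → wt e ≤ t →
      (∑ i, e i • ((a i, 1) : ZMod N × ZMod (2 * t + 1))) ≠ 0) ∧
    (∀ e e' : Fin n → ℤ,
      (∀ i, e i = -1 ∨ e i = 0 ∨ e i = 1) → 1 ≤ wt e → wt e ≤ t →
      (∀ i, e' i = -1 ∨ e' i = 0 ∨ e' i = 1) → 1 ≤ wt e' → wt e' ≤ t →
      (∑ i, e i • ((a i, 1) : ZMod N × ZMod (2 * t + 1))) =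
        (∑ i, e' i • ((a i, 1) : ZMod N × ZMod (2 * t + 1))) → e = e') := by
  have key : ∀ e e' : Fin n → ℤ,
      (∀ i, e i = -1 ∨ e i = 0 ∨ e i = 1) → 1 ≤ wt e → wt e ≤ t →
      (∀ i, e' i = -1 ∨ e' i = 0 ∨ e' i = 1) → 1 ≤ wt e' → wt e' ≤ t →
      (∑ i, e i • ((a i, 1) : ZMod N × ZMod (2 * t + 1))) =
        (∑ i, e' i • ((a i, 1) : ZMod N × ZMod (2 * t + 1))) → e = e' := by
    intro e e' he hw1 hwt he' hw1' hwt' hsum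
    -- split into components
    have hfst : (∑ i, e i • a i) = ∑ i, e' i • a i := by
      have := congrArg Prod.fst hsum
      simpa [Prod.fst_sum] using this
    have hsnd : (((∑ i, e i : ℤ)) : ZMod (2 * t + 1)) = ((∑ i, e' i : ℤ) : _) := by
      have := congrArg Prod.snd hsum
      simp only [Prod.snd_sum, Prod.smul_snd, zsmul_one] at this
      push_cast at this ⊢
      exact this
    -- second coordinate gives equal integer sums
    have hZ : (∑ i, e i) = ∑ i, e' i := by
      have hdvd : ((2 * t + 1 : ℕ) : ℤ) ∣ (∑ i, e i) - ∑ i, e' i := by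
        rw [← ZMod.intCast_zmod_eq_zero_iff_dvd]
        push_cast
        rw [sub_eq_zero]
        exact_mod_cast hsnd
      have h1 := abs_sum_le e he
      have h2 := abs_sum_le e' he'
      have habs : |(∑ i, e i) - ∑ i, e' i| < ((2 * t + 1 : ℕ) : ℤ) := by
        push_cast
        have := abs_sub (∑ i, e i) (∑ i, e' i)
        omega
      have := Int.eq_zero_of_abs_lt_dvd hdvd habs
      omega
    -- notation
    set p := (Pe e).card with hp
    set m := (Me e).card with hm
    set p' := (Pe e').card with hp'
    set m' := (Me e').card with hm'
    have hwe := wt_eq e he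
    have hwe' := wt_eq e' he'
    have hze := sumZ_eq e he
    have hze' := sumZ_eq e' he'
    have hcard : p + m' = p' + m := by omega
    have hle : p + m' ≤ t := by omega
    -- pick an index with e i ≠ 0 for padding
    have hex : ∃ i0 : Fin n, e i0 ≠ 0 := by
      by_contra h
      push_neg at h
      have : wt e = 0 := by
        rw [wt, Finset.card_eq_zero, Finset.filter_eq_empty_iff]
        intro i _
        simp [h i]
      omega
    obtain ⟨i0, _⟩ := hex
    set c := t - (p + m') with hc
    set X : Multiset (ZMod N) :=
      (Pe e).val.map a + (Me e').val.map a + Multiset.replicate c (a i0) with hX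
    set Y : Multiset (ZMod N) :=
      (Pe e').val.map a + (Me e).val.map a + Multiset.replicate c (a i0) with hY
    have hXY : X = Y := by
      apply hA
      · simp [hX, ← hp, ← hm']; omega
      · simp [hY, ← hp', ← hm]; omega
      · rintro x hx
        simp only [hX, Multiset.mem_add, Multiset.mem_map, Multiset.eq_of_mem_replicate] at hx
        rcases hx with (⟨i, _, rfl⟩ | ⟨i, _, rfl⟩) | hx
        · exact Set.mem_range_self i
        · exact Set.mem_range_self i
        · rw [Multiset.eq_of_mem_replicate hx]; exact Set.mem_range_self i0
      · rintro x hx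
        simp only [hY, Multiset.mem_add, Multiset.mem_map, Multiset.eq_of_mem_replicate] at hx
        rcases hx with (⟨i, _, rfl⟩ | ⟨i, _, rfl⟩) | hx
        · exact Set.mem_range_self i
        · exact Set.mem_range_self i
        · rw [Multiset.eq_of_mem_replicate hx]; exact Set.mem_range_self i0
      · have h1 := sumA_eq a e he
        have h2 := sumA_eq a e' he'
        rw [hfst, h2] at h1
        simp only [hX, hY, Multiset.sum_add, Multiset.sum_replicate]
        have hPs : ((Pe e).val.map a).sum = ∑ i ∈ Pe e, a i := rfl
        have hPs' : ((Pe e').val.map a).sum = ∑ i ∈ Pe e', a i := rfl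
        have hMs : ((Me e).val.map a).sum = ∑ i ∈ Me e, a i := rfl
        have hMs' : ((Me e').val.map a).sum = ∑ i ∈ Me e', a i := rfl
        rw [hPs, hPs', hMs, hMs']
        linear_combination -h1
    -- cancel the padding and undo the map
    have hXY2 : (Pe e).val.map a + (Me e').val.map a
        = (Pe e').val.map a + (Me e).val.map a := by
      rw [hX, hY] at hXY
      exact add_right_cancel hXY
    have hidx : (Pe e).val + (Me e').val = (Pe e').val + (Me e).val := by
      apply Multiset.map_injective ha
      simpa [Multiset.map_add] using hXY2
    funext i
    have hcnt := congrArg (Multiset.count i) hidx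
    simp only [Multiset.count_add, count_val, Pe, Me, Finset.mem_filter,
      Finset.mem_univ, true_and] at hcnt
    rcases he i with h | h | h <;> rcases he' i with h' | h' | h' <;>
      simp [h, h'] at hcnt ⊢ <;> omega
  refine ⟨?_, key⟩
  intro e he hw1 hwt hzero
  have hneg : ∀ i, (-e) i = -1 ∨ (-e) i = 0 ∨ (-e) i = 1 := by
    intro i; rcases he i with h | h | h <;> simp [h]
  have hwneg : wt (-e) = wt e := by
    unfold wt
    congr 1
    apply Finset.filter_congr
    intro i _
    simp
  have hsum' : (∑ i, e i • ((a i, 1) : ZMod N × ZMod (2 * t + 1)))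
      = ∑ i, (-e) i • ((a i, 1) : ZMod N × ZMod (2 * t + 1)) := by
    have hneg2 : ∑ i, (-e) i • ((a i, 1) : ZMod N × ZMod (2 * t + 1))
        = -∑ i, e i • ((a i, 1) : ZMod N × ZMod (2 * t + 1)) := by
      rw [← Finset.sum_neg_distrib]
      exact Finset.sum_congr rfl fun i _ => by simp
    rw [hneg2, hzero, neg_zero]
  have := key e (-e) he hw1 hwt hneg (by omega) (by omega) hsum'
  obtain ⟨i0, hi0⟩ : ∃ i0 : Fin n, e i0 ≠ 0 := by
    by_contra h
    push_neg at h
    have : wt e = 0 := by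
      rw [wt, Finset.card_eq_zero, Finset.filter_eq_empty_iff]
      intro i _
      simp [h i]
    omega
  have := congrFun this i0
  simp at this
  omega
end

section
/- Let p be prime, C a linear [n,k] code over F_p with minimum Hamming distance at least 2t+1, and let 0 ≤ k_+ + k_- < p. Define Λ = {x ∈ Z^n : (x mod p) ∈ C}. Then Λ is a subgroup of Z^n, and the translates v + B(n,t,k_+,k_-), for v ∈ Λ, are pairwise disjoint. -/
/-- The error ball `B(n,t,k₊,k₋)`. -/
def errBall (n t : ℕ) (kp km : ℕ) : Set (Fin n → ℤ) :=
  {x | (∀ i, -(km : ℤ) ≤ x i ∧ x i ≤ kp) ∧ wt x ≤ t}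

theorem stmt2 (p n t : ℕ) (hp : p.Prime)
    (C : Submodule (ZMod p) (Fin n → ZMod p))
    (hd : ∀ c ∈ C, c ≠ 0 → 2 * t + 1 ≤ wt c)
    (kp km : ℕ) (hk : kp + km < p) :
    (∃ Λ : AddSubgroup (Fin n → ℤ),
        (Λ : Set (Fin n → ℤ)) = {x | (fun i => (x i : ZMod p)) ∈ C}) ∧
    (∀ v ∈ {x : Fin n → ℤ | (fun i => (x i : ZMod p)) ∈ C},
     ∀ v' ∈ {x : Fin n → ℤ | (fun i => (x i : ZMod p)) ∈ C}, v ≠ v' →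
      ∀ b ∈ errBall n t kp km, ∀ b' ∈ errBall n t kp km, v + b ≠ v' + b') := by
  constructor
  · -- the subgroup
    refine ⟨AddSubgroup.comap
      (Pi.addMonoidHom (fun i : Fin n => (Int.castAddHom (ZMod p)).comp
        (Pi.evalAddMonoidHom (fun _ => ℤ) i)) :
        (Fin n → ℤ) →+ (Fin n → ZMod p)) C.toAddSubgroup, rfl⟩
  · rintro v hv v' hv' hne b ⟨hb1, hb2⟩ b' ⟨hb'1, hb'2⟩ heq
    -- d = v - v' = b' - b
    set d : Fin n → ℤ := fun i => b' i - b i with hdd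
    have hdvv : ∀ i, d i = v i - v' i := by
      intro i
      have := congrFun heq i
      simp only [Pi.add_apply] at this
      simp [hdd]; linarith
    have hd0 : d ≠ 0 := by
      intro h
      apply hne
      funext i
      have := congrFun h i
      rw [hdvv i] at this
      simpa using sub_eq_zero.mp this
    -- coordinates of d are small
    have hsmall : ∀ i, d i ≠ 0 → (d i : ZMod p) ≠ 0 := by
      intro i hi hcast
      have hdvd : (p : ℤ) ∣ d i := (ZMod.intCast_zmod_eq_zero_iff_dvd _ p).mp hcast
      have h1 := (hb1 i).1; have h2 := (hb1 i).2
      have h3 := (hb'1 i).1; have h4 := (hb'1 i).2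
      have habs : |d i| < (p : ℤ) := by
        rw [abs_lt]
        constructor <;> simp only [hdd] <;> push_cast <;> [linarith; linarith]
      exact hi (Int.eq_zero_of_abs_lt_dvd hdvd habs)
    -- c ∈ C
    set c : Fin n → ZMod p := fun i => (d i : ZMod p) with hcc
    have hcC : c ∈ C := by
      have : c = (fun i => (v i : ZMod p)) - (fun i => (v' i : ZMod p)) := by
        funext i
        simp only [hcc, hdvv i, Pi.sub_apply]
        push_cast
        ring
      rw [this]
      exact sub_mem hv hv'
    have hc0 : c ≠ 0 := by
      intro h
      apply hd0
      funext i
      by_contra hi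
      exact hsmall i hi (by simpa [hcc] using congrFun h i)
    -- weight bound
    have hwle : wt c ≤ wt b + wt b' := by
      have h1 : (Finset.univ.filter fun i => c i ≠ 0) ⊆
          (Finset.univ.filter fun i => b i ≠ 0) ∪
          (Finset.univ.filter fun i => b' i ≠ 0) := by
        intro i hi
        simp only [Finset.mem_filter, Finset.mem_union, Finset.mem_univ, true_and] at hi ⊢
        by_contra h
        push_neg at h
        apply hi
        simp [hcc, hdd, h.1, h.2]
      calc wt c ≤ ((Finset.univ.filter fun i => b i ≠ 0) ∪
          (Finset.univ.filter fun i => b' i ≠ 0)).card := Finset.card_le_card h1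
        _ ≤ wt b + wt b' := Finset.card_union_le _ _
    have := hd c hcC hc0
    omega
end

section
/- Let C ⊆ (Z_q)^n be a (possibly nonlinear) code with minimum Hamming distance at least 2t+1, and let k_+ + k_- < q with 0 ≤ k_- ≤ k_+. Define V = {v ∈ Z^n : (v mod q) ∈ C}. Then for any distinct v, v' ∈ V, the translates v + B(n,t,k_+,k_-) and v' + B(n,t,k_+,k_-) are disjoint. -/
theorem stmt3 (q n t : ℕ) (C : Set (Fin n → ZMod q))
    (hd : ∀ c ∈ C, ∀ c' ∈ C, c ≠ c' → 2 * t + 1 ≤ wt (c - c'))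
    (kp km : ℕ) (hkm : km ≤ kp) (hk : kp + km < q) :
    ∀ v ∈ {x : Fin n → ℤ | (fun i => (x i : ZMod q)) ∈ C},
    ∀ v' ∈ {x : Fin n → ℤ | (fun i => (x i : ZMod q)) ∈ C}, v ≠ v' →
      ∀ b ∈ errBall n t kp km, ∀ b' ∈ errBall n t kp km, v + b ≠ v' + b' := by
  intro v hv v' hv' hne b hb b' hb' heq
  have hcoord : ∀ i, v i + b i = v' i + b' i := fun i => congrFun heq i
  obtain ⟨hbnd, hwt⟩ := hb
  obtain ⟨hbnd', hwt'⟩ := hb'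
  by_cases hc : (fun i => ((v i : ZMod q))) = (fun i => ((v' i : ZMod q)))
  · apply hne
    funext i
    have h1 : ((v i : ZMod q)) = ((v' i : ZMod q)) := congrFun hc i
    have hqd : (q : ℤ) ∣ v' i - v i := ((ZMod.intCast_eq_intCast_iff _ _ _).mp h1).dvd
    have hd' : v' i - v i = b i - b' i := by linarith [hcoord i]
    have habs : |v' i - v i| < q := by
      rw [hd', abs_lt]
      constructor <;> [nlinarith [(hbnd i).1, (hbnd i).2, (hbnd' i).1, (hbnd' i).2];
        nlinarith [(hbnd i).1, (hbnd i).2, (hbnd' i).1, (hbnd' i).2]]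
    have : v' i - v i = 0 := Int.eq_zero_of_abs_lt_dvd hqd habs
    linarith
  · have hc1 := hd _ hv _ hv' hc
    have hsub : (Finset.univ.filter fun i =>
        ((fun i => ((v i : ZMod q))) - fun i => ((v' i : ZMod q))) i ≠ 0) ⊆
        (Finset.univ.filter fun i => b i ≠ 0) ∪ (Finset.univ.filter fun i => b' i ≠ 0) := by
      intro i hi
      simp only [Finset.mem_filter, Finset.mem_union, Finset.mem_univ, true_and,
        Pi.sub_apply] at hi ⊢
      by_contra h
      push_neg at h
      apply hi
      have hvv : v i = v' i := by have := hcoord i; rw [h.1, h.2] at this; linarith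
      rw [hvv]; ring
    have : wt ((fun i => ((v i : ZMod q))) - fun i => ((v' i : ZMod q))) ≤
        wt b + wt b' := by
      calc _ ≤ ((Finset.univ.filter fun i => b i ≠ 0) ∪
            (Finset.univ.filter fun i => b' i ≠ 0)).card := Finset.card_le_card hsub
        _ ≤ _ := Finset.card_union_le _ _
    omega
end

section
/- Let G be a finite abelian group, M = [-k_-, k_+] \ {0} ⊆ Z, and S = {s_1,...,s_n} ⊆ G. Define φ: Z^n → G by φ(x) = x_1 s_1 + ... + x_n s_n and let Λ = ker φ. If M partially t-splits G with splitter set S, then the translates v + B(n,t,k_+,k_-), v ∈ Λ, are pairwise disjoint. -/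
theorem stmt4 (G : Type*) [AddCommGroup G] [Fintype G]
    (n t kp km : ℕ) (s : Fin n → G)
    (hsplit_ne : ∀ e : Fin n → ℤ, (∀ i, -(km : ℤ) ≤ e i ∧ e i ≤ kp) →
      1 ≤ wt e → wt e ≤ t → (∑ i, e i • s i) ≠ 0)
    (hsplit_inj : ∀ e e' : Fin n → ℤ,
      (∀ i, -(km : ℤ) ≤ e i ∧ e i ≤ kp) → 1 ≤ wt e → wt e ≤ t →
      (∀ i, -(km : ℤ) ≤ e' i ∧ e' i ≤ kp) → 1 ≤ wt e' → wt e' ≤ t →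
      (∑ i, e i • s i) = (∑ i, e' i • s i) → e = e') :
    ∀ v ∈ {x : Fin n → ℤ | (∑ i, x i • s i) = 0},
    ∀ v' ∈ {x : Fin n → ℤ | (∑ i, x i • s i) = 0}, v ≠ v' →
      ∀ b ∈ errBall n t kp km, ∀ b' ∈ errBall n t kp km, v + b ≠ v' + b' := by
  intro v hv v' hv' hne b hb b' hb' heq
  simp only [Set.mem_setOf_eq] at hv hv'
  obtain ⟨hbr, hbt⟩ := hb
  obtain ⟨hbr', hbt'⟩ := hb'
  have hzero : ∀ e : Fin n → ℤ, wt e = 0 → e = 0 := by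
    intro e he
    funext i
    simp only [wt, Finset.card_eq_zero, Finset.filter_eq_empty_iff] at he
    simpa using he (Finset.mem_univ i)
  have hsum : (∑ i, b i • s i) = ∑ i, b' i • s i := by
    have : ∑ i, (v + b) i • s i = ∑ i, (v' + b') i • s i := by rw [heq]
    simpa [Pi.add_apply, add_smul, Finset.sum_add_distrib, hv, hv'] using this
  have hvv' : b = b' → False := by
    intro hbb'
    apply hne
    have := heq
    rw [hbb'] at this
    exact add_right_cancel this
  rcases Nat.eq_zero_or_pos (wt b) with h0 | h1
  · have hb0 : b = 0 := hzero b h0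
    rcases Nat.eq_zero_or_pos (wt b') with h0' | h1'
    · exact hvv' (hb0.trans (hzero b' h0').symm)
    · apply hsplit_ne b' hbr' h1' hbt'
      rw [← hsum, hb0]
      simp
  · rcases Nat.eq_zero_or_pos (wt b') with h0' | h1'
    · apply hsplit_ne b hbr h1 hbt
      rw [hsum, hzero b' h0']
      simp
    · exact hvv' (hsplit_inj b b' hbr h1 hbt hbr' h1' hbt' hsum)
end

section
/- Let G be a finite abelian group, M = [-k_-, k_+] \ {0}, and S = {s_1,...,s_n} ⊆ G. Define φ: Z^n → G by φ(x) = x·(s_1,...,s_n) and Λ = ker φ. If M completely t-splits G with splitter set S, then the translates v + B(n,t,k_+,k_-), v ∈ Λ, cover Z^n. -/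
theorem stmt5 (G : Type*) [AddCommGroup G] [Fintype G]
    (n t kp km : ℕ) (s : Fin n → G)
    (hsplit : ∀ g : G, ∃ e : Fin n → ℤ,
      (∀ i, -(km : ℤ) ≤ e i ∧ e i ≤ kp) ∧ wt e ≤ t ∧ (∑ i, e i • s i) = g) :
    ∀ z : Fin n → ℤ, ∃ v ∈ {x : Fin n → ℤ | (∑ i, x i • s i) = 0},
      ∃ b ∈ errBall n t kp km, z = v + b := by
  intro z
  obtain ⟨e, he1, he2, he3⟩ := hsplit (∑ i, z i • s i)
  refine ⟨z - e, ?_, e, ⟨he1, he2⟩, by ring⟩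
  simp only [Set.mem_setOf_eq, Pi.sub_apply, sub_smul]
  rw [Finset.sum_sub_distrib, he3, sub_self]
end

section
/- Let q be a prime power, t ≥ 1, and ξ a primitive element (generator of the multiplicative group) of F_{q^t}. For each α ∈ F_q, let d_α ∈ Z_{q^t−1} be the discrete logarithm of ξ + α to base ξ (these exist since ξ+α ≠ 0). Then the set {d_α : α ∈ F_q} ⊆ Z_{q^t−1} is a B_t[q^t−1;1] set of size q: all sums of t not-necessarily-distinct elements of the set are distinct modulo q^t−1. -/
open Polynomial IntermediateField

lemma stmt9_exists_map {α β : Type*} (f : α → β) :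
    ∀ m : Multiset β, (∀ x ∈ m, x ∈ Set.range f) → ∃ s : Multiset α, s.map f = m := by
  intro m
  induction m using Multiset.induction with
  | empty => exact fun _ => ⟨0, rfl⟩
  | cons a m ih =>
    intro h
    obtain ⟨s, hs⟩ := ih fun x hx => h x (Multiset.mem_cons_of_mem hx)
    obtain ⟨b, hb⟩ := h a (Multiset.mem_cons_self a m)
    exact ⟨b ::ₘ s, by rw [Multiset.map_cons, hb, hs]⟩

theorem stmt9 (F E : Type*) [Field F] [Field E] [Fintype F] [Fintype E] [Algebra F E]
    (t : ℕ) (ht : 1 ≤ t) (hcard : Fintype.card E = Fintype.card F ^ t)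
    (ξ : E) (hξ : ∀ z : E, z ≠ 0 → ∃ k : ℕ, ξ ^ k = z)
    (d : F → ZMod (Fintype.card F ^ t - 1))
    (hd : ∀ α : F, ξ ^ (d α).val = ξ + algebraMap F E α) :
    Function.Injective d ∧ IsBtSet (Fintype.card F ^ t - 1) t (Set.range d) := by
  classical
  have hq2 : 2 ≤ Fintype.card F := Fintype.one_lt_card
  have hqt : 2 ≤ Fintype.card F ^ t := le_trans hq2 (Nat.le_self_pow (by omega) _)
  have hinj : Function.Injective d := by
    intro a b hab
    have h1 := hd a
    rw [hab, hd b] at h1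
    exact (algebraMap F E).injective (add_left_cancel h1.symm)
  refine ⟨hinj, ?_⟩
  intro m m' hm hm' hmem hmem' hsum
  by_cases hN1 : Fintype.card F ^ t - 1 = 1
  · haveI : Subsingleton (ZMod (Fintype.card F ^ t - 1)) := by rw [hN1]; infer_instance
    rw [Multiset.eq_replicate.mpr ⟨hm, fun b _ => Subsingleton.elim b 0⟩,
      Multiset.eq_replicate.mpr ⟨hm', fun b _ => Subsingleton.elim b 0⟩]
  · have hN2 : 2 ≤ Fintype.card F ^ t - 1 := by omega
    haveI : NeZero (Fintype.card F ^ t - 1) := ⟨by omega⟩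
    have hNE : Fintype.card F ^ t - 1 = Fintype.card E - 1 := by rw [hcard]
    -- ξ ≠ 0
    have hξ0 : ξ ≠ 0 := by
      intro h0
      have hsurj : Function.Surjective (fun b : Bool => if b then (1 : E) else 0) := by
        intro z
        rcases eq_or_ne z 0 with rfl | hz
        · exact ⟨false, rfl⟩
        · obtain ⟨k, hk⟩ := hξ z hz
          rcases Nat.eq_zero_or_pos k with rfl | hk0
          · exact ⟨true, by simpa using hk⟩
          · rw [h0, zero_pow (by omega)] at hk
            exact absurd hk.symm hz
      have hle : Fintype.card E ≤ 2 :=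
        le_trans (Fintype.card_le_of_surjective _ hsurj) (by simp)
      omega
    have hpowN : ξ ^ (Fintype.card F ^ t - 1) = 1 := by
      rw [hNE]; exact FiniteField.pow_card_sub_one_eq_one ξ hξ0
    have hfin : IsOfFinOrder ξ :=
      isOfFinOrder_iff_pow_eq_one.mpr ⟨Fintype.card F ^ t - 1, by omega, hpowN⟩
    -- order of ξ is N
    have horder : orderOf ξ = Fintype.card F ^ t - 1 := by
      have hdvd : orderOf ξ ∣ Fintype.card F ^ t - 1 := orderOf_dvd_of_pow_eq_one hpowN
      have hle : Fintype.card F ^ t - 1 ≤ orderOf ξ := by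
        have hsub : Finset.univ.filter (fun z : E => z ≠ 0) ⊆
            (Finset.range (orderOf ξ)).image (ξ ^ ·) := by
          intro z hz
          simp only [Finset.mem_filter] at hz
          obtain ⟨k, hk⟩ := hξ z hz.2
          exact Finset.mem_image.mpr ⟨k % orderOf ξ,
            Finset.mem_range.mpr (Nat.mod_lt _ hfin.orderOf_pos), by rw [pow_mod_orderOf]; exact hk⟩
        have h1 := Finset.card_le_card hsub
        have h2 : ((Finset.range (orderOf ξ)).image (ξ ^ ·)).card ≤ orderOf ξ :=
          le_trans Finset.card_image_le (by simp)
        have h3 : (Finset.univ.filter (fun z : E => z ≠ 0)).card = Fintype.card E - 1 := by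
          rw [Finset.filter_ne', Finset.card_erase_of_mem (Finset.mem_univ 0), Finset.card_univ]
        omega
      exact le_antisymm (Nat.le_of_dvd (by omega) hdvd) hle
    have hmod : ∀ n : ℕ, ξ ^ (n % (Fintype.card F ^ t - 1)) = ξ ^ n := by
      intro n; rw [← horder]; exact pow_mod_orderOf ξ n
    -- power of a sum
    have hpowsum : ∀ mm : Multiset (ZMod (Fintype.card F ^ t - 1)),
        ξ ^ mm.sum.val = (mm.map fun a => ξ ^ a.val).prod := by
      intro mm
      induction mm using Multiset.induction with
      | empty => simp
      | cons a mm ih =>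
        rw [Multiset.sum_cons, Multiset.map_cons, Multiset.prod_cons, ← ih,
          ZMod.val_add, hmod, pow_add]
    -- decompose m, m' via d
    obtain ⟨s, rfl⟩ := stmt9_exists_map d m hmem
    obtain ⟨s', rfl⟩ := stmt9_exists_map d m' hmem'
    rw [Multiset.card_map] at hm hm'
    suffices hss : s = s' by rw [hss]
    -- equality of products
    have hprod : (s.map fun α => ξ + algebraMap F E α).prod
        = (s'.map fun α => ξ + algebraMap F E α).prod := by
      have h1 : ξ ^ ((s.map d).sum).val = ξ ^ ((s'.map d).sum).val := by rw [hsum]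
      rw [hpowsum, hpowsum, Multiset.map_map, Multiset.map_map] at h1
      simpa [Function.comp, hd] using h1
    -- field-theoretic facts
    have hfr : Module.finrank F E = t := by
      have hc := Module.card_eq_pow_finrank (K := F) (V := E)
      rw [hcard] at hc
      exact (Nat.pow_right_injective hq2 hc.symm)
    have htop : F⟮ξ⟯ = ⊤ := by
      have hall : ∀ x : E, x ∈ F⟮ξ⟯ := by
        intro x
        rcases eq_or_ne x 0 with rfl | hx
        · exact zero_mem _
        · obtain ⟨k, hk⟩ := hξ x hx
          exact hk ▸ pow_mem (IntermediateField.mem_adjoin_simple_self F ξ) k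
      exact eq_top_iff.mpr fun x _ => hall x
    have hmin : (minpoly F ξ).natDegree = t := by
      have h1 := IntermediateField.adjoin.finrank (K := F) (L := E) (x := ξ)
        (IsIntegral.of_finite F ξ)
      rw [htop, IntermediateField.finrank_top', hfr] at h1
      exact h1.symm
    -- polynomials
    set P : Multiset F → F[X] := fun u => (u.map fun a => X - C (-a)).prod with hP
    have hPmm : ∀ u : Multiset F, P u = ((u.map fun a => -a).map fun a => X - C a).prod := by
      intro u; rw [hP, Multiset.map_map]; rfl
    have hmonic : ∀ u : Multiset F, (P u).Monic := fun u =>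
      monic_multiset_prod_of_monic u _ fun a _ => monic_X_sub_C _
    have hdegP : ∀ u : Multiset F, (P u).natDegree = Multiset.card u := by
      intro u
      rw [hPmm, natDegree_multiset_prod_X_sub_C_eq_card, Multiset.card_map]
    have haevalP : ∀ u : Multiset F,
        (aeval ξ) (P u) = (u.map fun α => ξ + algebraMap F E α).prod := by
      intro u
      rw [hP, map_multiset_prod, Multiset.map_map]
      refine congrArg _ (Multiset.map_congr rfl fun a _ => ?_)
      simp [sub_neg_eq_add]
    have heq : P s = P s' := by
      by_contra hne
      have hdiff : P s - P s' ≠ 0 := sub_ne_zero.mpr hne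
      have haev0 : (aeval ξ) (P s - P s') = 0 := by
        rw [map_sub, haevalP, haevalP, hprod, sub_self]
      have hdvd2 : minpoly F ξ ∣ (P s - P s') := minpoly.dvd F ξ haev0
      have hlt : (P s - P s').natDegree < t := by
        have h2 : (P s).degree = (P s').degree := by
          rw [degree_eq_natDegree (hmonic s).ne_zero, degree_eq_natDegree (hmonic s').ne_zero,
            hdegP, hdegP, hm, hm']
        have h3 := degree_sub_lt h2 (hmonic s).ne_zero
          (by rw [(hmonic s).leadingCoeff, (hmonic s').leadingCoeff])
        rw [degree_eq_natDegree (hmonic s).ne_zero, hdegP, hm] at h3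
        exact (natDegree_lt_iff_degree_lt hdiff).mpr h3
      have h4 := Polynomial.natDegree_le_of_dvd hdvd2 hdiff
      rw [hmin] at h4
      omega
    have hroots : s.map (fun a => -a) = s'.map (fun a => -a) := by
      have h5 : (P s).roots = (P s').roots := by rw [heq]
      rwa [hPmm, hPmm, roots_multiset_prod_X_sub_C, roots_multiset_prod_X_sub_C] at h5
    exact Multiset.map_injective (f := fun a : F => -a) neg_injective hroots
end

section
/- Let k ≥ 1, N coprime to k!, A ⊆ Z_N a k-fold Sidon set, and 0 ≤ k_- ≤ k_+ ≤ k with k_+ + k_- ≥ 1. In G = Z_{2(k_++k_-)+1} × Z_N, let S = {(1, x) : x ∈ A}. Then M = [-k_-, k_+]\{0} partially 2-splits G with splitter set S: the elements c_1·s + c_2·s' over pairs with coefficients in M∪{0}, not both zero coefficients, represent each nonzero group element at most once (all such combinations supported on at most 2 elements of S with Hamming weight between 1 and 2 are distinct and nonzero). -/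
/-- `A ⊆ ℤ_N` is a `k`-fold Sidon set: for all `c₁,c₂,c₃,c₄ ∈ [-k,k]` with
`c₁+c₂+c₃+c₄ = 0`, the equation `c₁x₁+c₂x₂+c₃x₃+c₄x₄ ≡ 0 (mod N)` has only
trivial solutions in `A`. -/
def IsKFoldSidon (N k : ℕ) (A : Set (ZMod N)) : Prop :=
  ∀ c : Fin 4 → ℤ, (∀ i, -(k : ℤ) ≤ c i ∧ c i ≤ k) → (∑ i, c i) = 0 →
    ∀ x : Fin 4 → ZMod N, (∀ i, x i ∈ A) → (∑ i, c i • x i) = 0 →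
      ∃ S T : Finset (Fin 4),
        S ∪ T = Finset.univ.filter (fun i => c i ≠ 0) ∧ Disjoint S T ∧
        (∑ i ∈ S, c i) = 0 ∧ (∑ i ∈ T, c i) = 0 ∧
        (∀ i ∈ S, ∀ j ∈ S, x i = x j) ∧ (∀ i ∈ T, ∀ j ∈ T, x i = x j)

lemma stmt11_pairSum {m N n : ℕ} (a : Fin n → ZMod N) (e : Fin n → ℤ) :
    (∑ i, e i • ((1, a i) : ZMod m × ZMod N)) =
      (((∑ i, e i : ℤ) : ZMod m), ∑ i, e i • a i) := by
  rw [Prod.ext_iff]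
  refine ⟨?_, ?_⟩
  · rw [Prod.fst_sum]; push_cast; simp [Prod.smul_mk]
  · rw [Prod.snd_sum]; simp [Prod.smul_mk]

lemma stmt11_sum4 (c : Fin 4 → ℤ) (S : Finset (Fin 4)) :
    ∑ i ∈ S, c i = (if 0 ∈ S then c 0 else 0) + (if 1 ∈ S then c 1 else 0)
      + (if 2 ∈ S then c 2 else 0) + (if 3 ∈ S then c 3 else 0) := by
  rw [← Finset.univ_inter S, ← Finset.sum_ite_mem, Fin.sum_univ_four]
  simp

lemma stmt11_castInj (kp km : ℕ) (x y : ℤ) (hx1 : -(2*km) ≤ x) (hx2 : x ≤ 2*kp)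
    (hy1 : -(2*km) ≤ y) (hy2 : y ≤ 2*kp)
    (h : ((x : ZMod (2*(kp+km)+1)) = (y : ZMod (2*(kp+km)+1)))) : x = y := by
  have hd : ((2*(kp+km)+1 : ℕ) : ℤ) ∣ x - y := by
    rwa [← ZMod.intCast_zmod_eq_zero_iff_dvd, Int.cast_sub, sub_eq_zero]
  have := Int.eq_zero_of_abs_lt_dvd hd (by rw [abs_sub_lt_iff]; push_cast; omega)
  omega

lemma stmt11_L2 {N k n : ℕ} (a : Fin n → ZMod N) (ha : Function.Injective a)
    (hA : IsKFoldSidon N k (Set.range a)) (i j : Fin n) (hij : i ≠ j)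
    (b : ℤ) (hb : b ≠ 0) (hb1 : -(k:ℤ) ≤ b) (hb2 : b ≤ k)
    (h : b • a i = b • a j) : False := by
  obtain ⟨S, T, hST, hd, hS, hT, hxS, hxT⟩ :=
    hA ![b, -b, 0, 0] (by intro p; fin_cases p <;> simp <;> omega)
      (by simp [Fin.sum_univ_four])
      ![a i, a j, a j, a j] (by intro p; fin_cases p <;> simp)
      (by simp [Fin.sum_univ_four, ← zsmul_eq_mul, h])
  have hmem : ∀ p : Fin 4, (p ∈ S ∨ p ∈ T) ↔ ![b, -b, 0, 0] p ≠ 0 := by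
    intro p
    rw [← Finset.mem_union, hST, Finset.mem_filter]
    simp
  have h0 : (0:Fin 4) ∈ S ∨ (0:Fin 4) ∈ T := (hmem 0).mpr (by simpa using hb)
  have h1 : (1:Fin 4) ∈ S ∨ (1:Fin 4) ∈ T := (hmem 1).mpr (by simpa using hb)
  have h2S : (2:Fin 4) ∉ S := fun hh => by simpa using (hmem 2).mp (Or.inl hh)
  have h2T : (2:Fin 4) ∉ T := fun hh => by simpa using (hmem 2).mp (Or.inr hh)
  have h3S : (3:Fin 4) ∉ S := fun hh => by simpa using (hmem 3).mp (Or.inl hh)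
  have h3T : (3:Fin 4) ∉ T := fun hh => by simpa using (hmem 3).mp (Or.inr hh)
  rcases h0 with h0S | h0T <;> rcases h1 with h1S | h1T
  · exact hij (ha (by simpa using hxS 0 h0S 1 h1S))
  · have h1S : (1:Fin 4) ∉ S := Finset.disjoint_right.mp hd h1T
    rw [stmt11_sum4] at hS
    simp [h0S, h1S, h2S, h3S] at hS
    exact hb hS
  · have h1T : (1:Fin 4) ∉ T := Finset.disjoint_left.mp hd h1S
    rw [stmt11_sum4] at hT
    simp [h0T, h1T, h2T, h3T] at hT
    exact hb hT
  · exact hij (ha (by simpa using hxT 0 h0T 1 h1T))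

lemma stmt11_L3 {N k n : ℕ} (a : Fin n → ZMod N) (ha : Function.Injective a)
    (hA : IsKFoldSidon N k (Set.range a)) (i₁ i₂ j : Fin n) (hi : i₁ ≠ i₂)
    (b₁ b₂ d : ℤ) (hb₁ : b₁ ≠ 0) (hb₂ : b₂ ≠ 0) (hd0 : d ≠ 0)
    (hbd1 : -(k:ℤ) ≤ b₁ ∧ b₁ ≤ k) (hbd2 : -(k:ℤ) ≤ b₂ ∧ b₂ ≤ k)
    (hbd3 : -(k:ℤ) ≤ d ∧ d ≤ k) (hsum : b₁ + b₂ = d)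
    (h : b₁ • a i₁ + b₂ • a i₂ = d • a j) : False := by
  obtain ⟨S, T, hST, hdj, hS, hT, hxS, hxT⟩ :=
    hA ![b₁, b₂, -d, 0] (by intro p; fin_cases p <;> simp <;> omega)
      (by simp [Fin.sum_univ_four]; omega)
      ![a i₁, a i₂, a j, a j] (by intro p; fin_cases p <;> simp)
      (by simp only [Fin.sum_univ_four]
          simp [← zsmul_eq_mul, neg_smul]
          rw [h]; ring)
  have hmem : ∀ p : Fin 4, (p ∈ S ∨ p ∈ T) ↔ ![b₁, b₂, -d, 0] p ≠ 0 := by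
    intro p
    rw [← Finset.mem_union, hST, Finset.mem_filter]
    simp
  have h0 : (0:Fin 4) ∈ S ∨ (0:Fin 4) ∈ T := (hmem 0).mpr (by simpa using hb₁)
  have h1 : (1:Fin 4) ∈ S ∨ (1:Fin 4) ∈ T := (hmem 1).mpr (by simpa using hb₂)
  have h2 : (2:Fin 4) ∈ S ∨ (2:Fin 4) ∈ T := (hmem 2).mpr (by simpa using hd0)
  have h3S : (3:Fin 4) ∉ S := fun hh => by simpa using (hmem 3).mp (Or.inl hh)
  have h3T : (3:Fin 4) ∉ T := fun hh => by simpa using (hmem 3).mp (Or.inr hh)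
  rcases h0 with h0S | h0T <;> rcases h1 with h1S | h1T
  · exact hi (ha (by simpa using hxS 0 h0S 1 h1S))
  · have h1S : (1:Fin 4) ∉ S := Finset.disjoint_right.mp hdj h1T
    have h0T : (0:Fin 4) ∉ T := Finset.disjoint_left.mp hdj h0S
    rcases h2 with h2S | h2T
    · have h2T : (2:Fin 4) ∉ T := Finset.disjoint_left.mp hdj h2S
      rw [stmt11_sum4] at hT
      simp [h0T, h1T, h2T, h3T] at hT
      exact hb₂ hT
    · have h2S : (2:Fin 4) ∉ S := Finset.disjoint_right.mp hdj h2T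
      rw [stmt11_sum4] at hS
      simp [h0S, h1S, h2S, h3S] at hS
      exact hb₁ hS
  · have h1T : (1:Fin 4) ∉ T := Finset.disjoint_left.mp hdj h1S
    have h0S : (0:Fin 4) ∉ S := Finset.disjoint_right.mp hdj h0T
    rcases h2 with h2S | h2T
    · have h2T : (2:Fin 4) ∉ T := Finset.disjoint_left.mp hdj h2S
      rw [stmt11_sum4] at hT
      simp [h0T, h1T, h2T, h3T] at hT
      exact hb₁ hT
    · have h2S : (2:Fin 4) ∉ S := Finset.disjoint_right.mp hdj h2T
      rw [stmt11_sum4] at hS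
      simp [h0S, h1S, h2S, h3S] at hS
      exact hb₂ hS
  · exact hi (ha (by simpa using hxT 0 h0T 1 h1T))

lemma stmt11_L4 {N k n : ℕ} (a : Fin n → ZMod N) (ha : Function.Injective a)
    (hA : IsKFoldSidon N k (Set.range a)) (i₁ i₂ j₁ j₂ : Fin n)
    (hi : i₁ ≠ i₂) (hj : j₁ ≠ j₂)
    (b₁ b₂ d₁ d₂ : ℤ) (hb₁ : b₁ ≠ 0) (hb₂ : b₂ ≠ 0) (hd₁ : d₁ ≠ 0) (hd₂ : d₂ ≠ 0)
    (hB1 : -(k:ℤ) ≤ b₁ ∧ b₁ ≤ k) (hB2 : -(k:ℤ) ≤ b₂ ∧ b₂ ≤ k)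
    (hD1 : -(k:ℤ) ≤ d₁ ∧ d₁ ≤ k) (hD2 : -(k:ℤ) ≤ d₂ ∧ d₂ ≤ k)
    (hsum : b₁ + b₂ = d₁ + d₂)
    (h : b₁ • a i₁ + b₂ • a i₂ = d₁ • a j₁ + d₂ • a j₂) :
    (i₁ = j₁ ∧ i₂ = j₂ ∧ b₁ = d₁ ∧ b₂ = d₂) ∨
    (i₁ = j₂ ∧ i₂ = j₁ ∧ b₁ = d₂ ∧ b₂ = d₁) := by
  obtain ⟨S, T, hST, hdj, hS, hT, hxS, hxT⟩ :=
    hA ![b₁, b₂, -d₁, -d₂] (by intro p; fin_cases p <;> simp <;> omega)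
      (by simp [Fin.sum_univ_four]; omega)
      ![a i₁, a i₂, a j₁, a j₂] (by intro p; fin_cases p <;> simp)
      (by simp only [Fin.sum_univ_four]
          simp [← zsmul_eq_mul, neg_smul]
          rw [h]; ring)
  have hmem : ∀ p : Fin 4, (p ∈ S ∨ p ∈ T) ↔ ![b₁, b₂, -d₁, -d₂] p ≠ 0 := by
    intro p
    rw [← Finset.mem_union, hST, Finset.mem_filter]
    simp
  have h0 : (0:Fin 4) ∈ S ∨ (0:Fin 4) ∈ T := (hmem 0).mpr (by simpa using hb₁)
  have h1 : (1:Fin 4) ∈ S ∨ (1:Fin 4) ∈ T := (hmem 1).mpr (by simpa using hb₂)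
  have h2 : (2:Fin 4) ∈ S ∨ (2:Fin 4) ∈ T := (hmem 2).mpr (by simpa using hd₁)
  have h3 : (3:Fin 4) ∈ S ∨ (3:Fin 4) ∈ T := (hmem 3).mpr (by simpa using hd₂)
  rcases h0 with h0S | h0T <;> rcases h1 with h1S | h1T
  · exact absurd (ha (by simpa using hxS 0 h0S 1 h1S)) hi
  · have h1S : (1:Fin 4) ∉ S := Finset.disjoint_right.mp hdj h1T
    have h0T : (0:Fin 4) ∉ T := Finset.disjoint_left.mp hdj h0S
    rcases h2 with h2S | h2T <;> rcases h3 with h3S | h3T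
    · exact absurd (ha (by simpa using hxS 2 h2S 3 h3S)) hj
    · have h2T : (2:Fin 4) ∉ T := Finset.disjoint_left.mp hdj h2S
      have h3S : (3:Fin 4) ∉ S := Finset.disjoint_right.mp hdj h3T
      rw [stmt11_sum4] at hS hT
      simp [h0S, h1S, h2S, h3S, h0T, h1T, h2T, h3T] at hS hT
      exact Or.inl ⟨ha (by simpa using hxS 0 h0S 2 h2S),
        ha (by simpa using hxT 1 h1T 3 h3T), by omega, by omega⟩
    · have h2S : (2:Fin 4) ∉ S := Finset.disjoint_right.mp hdj h2T
      have h3T : (3:Fin 4) ∉ T := Finset.disjoint_left.mp hdj h3S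
      rw [stmt11_sum4] at hS hT
      simp [h0S, h1S, h2S, h3S, h0T, h1T, h2T, h3T] at hS hT
      exact Or.inr ⟨ha (by simpa using hxS 0 h0S 3 h3S),
        ha (by simpa using hxT 1 h1T 2 h2T), by omega, by omega⟩
    · exact absurd (ha (by simpa using hxT 2 h2T 3 h3T)) hj
  · have h1T : (1:Fin 4) ∉ T := Finset.disjoint_left.mp hdj h1S
    have h0S : (0:Fin 4) ∉ S := Finset.disjoint_right.mp hdj h0T
    rcases h2 with h2S | h2T <;> rcases h3 with h3S | h3T
    · exact absurd (ha (by simpa using hxS 2 h2S 3 h3S)) hj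
    · have h2T : (2:Fin 4) ∉ T := Finset.disjoint_left.mp hdj h2S
      have h3S : (3:Fin 4) ∉ S := Finset.disjoint_right.mp hdj h3T
      rw [stmt11_sum4] at hS hT
      simp [h0S, h1S, h2S, h3S, h0T, h1T, h2T, h3T] at hS hT
      exact Or.inr ⟨ha (by simpa using hxT 0 h0T 3 h3T),
        ha (by simpa using hxS 1 h1S 2 h2S), by omega, by omega⟩
    · have h2S : (2:Fin 4) ∉ S := Finset.disjoint_right.mp hdj h2T
      have h3T : (3:Fin 4) ∉ T := Finset.disjoint_left.mp hdj h3S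
      rw [stmt11_sum4] at hS hT
      simp [h0S, h1S, h2S, h3S, h0T, h1T, h2T, h3T] at hS hT
      exact Or.inl ⟨ha (by simpa using hxT 0 h0T 2 h2T),
        ha (by simpa using hxS 1 h1S 3 h3S), by omega, by omega⟩
    · exact absurd (ha (by simpa using hxT 2 h2T 3 h3T)) hj
  · exact absurd (ha (by simpa using hxT 0 h0T 1 h1T)) hi

lemma stmt11_wt_one {n : ℕ} (e : Fin n → ℤ) (h : wt e = 1) :
    ∃ i, e i ≠ 0 ∧ ∀ j, j ≠ i → e j = 0 := by
  obtain ⟨i, hi⟩ := Finset.card_eq_one.mp h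
  refine ⟨i, ?_, fun j hj => ?_⟩
  · have : i ∈ Finset.univ.filter fun l => e l ≠ 0 := by
      rw [hi]; exact Finset.mem_singleton_self i
    simpa using this
  · by_contra hne
    have : j ∈ Finset.univ.filter fun l => e l ≠ 0 := by simpa using hne
    rw [hi, Finset.mem_singleton] at this
    exact hj this

lemma stmt11_wt_two {n : ℕ} (e : Fin n → ℤ) (h : wt e = 2) :
    ∃ i j, i ≠ j ∧ e i ≠ 0 ∧ e j ≠ 0 ∧ ∀ l, l ≠ i → l ≠ j → e l = 0 := by
  obtain ⟨i, j, hij, hs⟩ := Finset.card_eq_two.mp h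
  refine ⟨i, j, hij, ?_, ?_, fun l hl1 hl2 => ?_⟩
  · have : i ∈ Finset.univ.filter fun l => e l ≠ 0 := by rw [hs]; simp
    simpa using this
  · have : j ∈ Finset.univ.filter fun l => e l ≠ 0 := by rw [hs]; simp
    simpa using this
  · by_contra hne
    have : l ∈ Finset.univ.filter fun l => e l ≠ 0 := by simpa using hne
    rw [hs, Finset.mem_insert, Finset.mem_singleton] at this
    tauto

theorem stmt11 (N k : ℕ) (hk : 1 ≤ k) (hN : Nat.Coprime N (Nat.factorial k))
    (n : ℕ) (a : Fin n → ZMod N) (ha : Function.Injective a)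
    (hA : IsKFoldSidon N k (Set.range a))
    (kp km : ℕ) (hkm : km ≤ kp) (hkpk : kp ≤ k) (hk1 : 1 ≤ kp + km) :
    (∀ e : Fin n → ℤ, (∀ i, -(km : ℤ) ≤ e i ∧ e i ≤ kp) → 1 ≤ wt e → wt e ≤ 2 →
      (∑ i, e i • ((1, a i) : ZMod (2 * (kp + km) + 1) × ZMod N)) ≠ 0) ∧
    (∀ e e' : Fin n → ℤ,
      (∀ i, -(km : ℤ) ≤ e i ∧ e i ≤ kp) → 1 ≤ wt e → wt e ≤ 2 →
      (∀ i, -(km : ℤ) ≤ e' i ∧ e' i ≤ kp) → 1 ≤ wt e' → wt e' ≤ 2 →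
      (∑ i, e i • ((1, a i) : ZMod (2 * (kp + km) + 1) × ZMod N)) =
        (∑ i, e' i • ((1, a i) : ZMod (2 * (kp + km) + 1) × ZMod N)) → e = e') := by
  have hkpZ : (kp : ℤ) ≤ (k : ℤ) := by exact_mod_cast hkpk
  have hkmZ : (km : ℤ) ≤ (kp : ℤ) := by exact_mod_cast hkm
  constructor
  · -- nonzero
    intro e he hw1 hw2 h
    rw [stmt11_pairSum, Prod.ext_iff] at h
    obtain ⟨h1, h2⟩ := h
    simp only [Prod.fst_zero, Prod.snd_zero] at h1 h2
    have hw : wt e = 1 ∨ wt e = 2 := by omega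
    rcases hw with hw | hw
    · obtain ⟨i, hi0, hiz⟩ := stmt11_wt_one e hw
      have hsum : (∑ l, e l) = e i :=
        Finset.sum_eq_single_of_mem i (Finset.mem_univ i) (fun b _ hb => hiz b hb)
      rw [hsum] at h1
      have := stmt11_castInj kp km (e i) 0
        (by have := he i; omega) (by have := he i; omega) (by omega) (by omega)
        (by simpa using h1)
      exact hi0 this
    · obtain ⟨i, j, hij, hi0, hj0, hz⟩ := stmt11_wt_two e hw
      have hsum : (∑ l, e l) = e i + e j :=
        Finset.sum_eq_add_of_mem i j (Finset.mem_univ i) (Finset.mem_univ j) hij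
          (fun c _ hc => hz c hc.1 hc.2)
      have hsumA : (∑ l, e l • a l) = e i • a i + e j • a j :=
        Finset.sum_eq_add_of_mem i j (Finset.mem_univ i) (Finset.mem_univ j) hij
          (fun c _ hc => by rw [hz c hc.1 hc.2, zero_smul])
      rw [hsum] at h1
      rw [hsumA] at h2
      have hij0 : e i + e j = 0 := stmt11_castInj kp km (e i + e j) 0
        (by have := he i; have := he j; omega) (by have := he i; have := he j; omega)
        (by omega) (by omega) (by simpa using h1)
      have hji : e j = - (e i) := by omega
      rw [hji, neg_smul, ← sub_eq_add_neg, sub_eq_zero] at h2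
      exact stmt11_L2 a ha hA i j hij (e i) hi0
        (by have := he i; omega) (by have := he i; omega) h2
  · -- injective
    intro e e' he hw1 hw2 he' hw1' hw2' h
    rw [stmt11_pairSum, stmt11_pairSum, Prod.ext_iff] at h
    obtain ⟨h1, h2⟩ := h
    have hw : wt e = 1 ∨ wt e = 2 := by omega
    have hw' : wt e' = 1 ∨ wt e' = 2 := by omega
    rcases hw with hw | hw <;> rcases hw' with hw' | hw'
    · -- (1,1)
      obtain ⟨i, hi0, hiz⟩ := stmt11_wt_one e hw
      obtain ⟨j, hj0, hjz⟩ := stmt11_wt_one e' hw'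
      have hsum : (∑ l, e l) = e i :=
        Finset.sum_eq_single_of_mem i (Finset.mem_univ i) (fun b _ hb => hiz b hb)
      have hsum' : (∑ l, e' l) = e' j :=
        Finset.sum_eq_single_of_mem j (Finset.mem_univ j) (fun b _ hb => hjz b hb)
      have hsumA : (∑ l, e l • a l) = e i • a i :=
        Finset.sum_eq_single_of_mem i (Finset.mem_univ i)
          (fun b _ hb => by rw [hiz b hb, zero_smul])
      have hsumA' : (∑ l, e' l • a l) = e' j • a j :=
        Finset.sum_eq_single_of_mem j (Finset.mem_univ j)
          (fun b _ hb => by rw [hjz b hb, zero_smul])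
      rw [hsum, hsum'] at h1
      rw [hsumA, hsumA'] at h2
      have hbd : e i = e' j := stmt11_castInj kp km (e i) (e' j)
        (by have := he i; omega) (by have := he i; omega)
        (by have := he' j; omega) (by have := he' j; omega) h1
      by_cases hij : i = j
      · subst hij
        funext l
        by_cases hl : l = i
        · subst hl; exact hbd
        · rw [hiz l hl, hjz l hl]
      · exfalso
        rw [← hbd] at h2
        exact stmt11_L2 a ha hA i j hij (e i) hi0
          (by have := he i; omega) (by have := he i; omega) h2
    · -- (1,2) : impossible
      exfalso
      obtain ⟨i, hi0, hiz⟩ := stmt11_wt_one e hw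
      obtain ⟨j₁, j₂, hj, hj1, hj2, hjz⟩ := stmt11_wt_two e' hw'
      have hsum : (∑ l, e l) = e i :=
        Finset.sum_eq_single_of_mem i (Finset.mem_univ i) (fun b _ hb => hiz b hb)
      have hsum' : (∑ l, e' l) = e' j₁ + e' j₂ :=
        Finset.sum_eq_add_of_mem j₁ j₂ (Finset.mem_univ _) (Finset.mem_univ _) hj
          (fun c _ hc => hjz c hc.1 hc.2)
      have hsumA : (∑ l, e l • a l) = e i • a i :=
        Finset.sum_eq_single_of_mem i (Finset.mem_univ i)
          (fun b _ hb => by rw [hiz b hb, zero_smul])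
      have hsumA' : (∑ l, e' l • a l) = e' j₁ • a j₁ + e' j₂ • a j₂ :=
        Finset.sum_eq_add_of_mem j₁ j₂ (Finset.mem_univ _) (Finset.mem_univ _) hj
          (fun c _ hc => by rw [hjz c hc.1 hc.2, zero_smul])
      rw [hsum, hsum'] at h1
      rw [hsumA, hsumA'] at h2
      have hbd : e i = e' j₁ + e' j₂ := stmt11_castInj kp km (e i) (e' j₁ + e' j₂)
        (by have := he i; omega) (by have := he i; omega)
        (by have := he' j₁; have := he' j₂; omega)
        (by have := he' j₁; have := he' j₂; omega) h1
      exact stmt11_L3 a ha hA j₁ j₂ i hj (e' j₁) (e' j₂) (e i) hj1 hj2 hi0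
        (by have := he' j₁; omega) (by have := he' j₂; omega)
        (by have := he i; omega) hbd.symm h2.symm
    · -- (2,1) : impossible
      exfalso
      obtain ⟨i₁, i₂, hi, hi1, hi2, hiz⟩ := stmt11_wt_two e hw
      obtain ⟨j, hj0, hjz⟩ := stmt11_wt_one e' hw'
      have hsum : (∑ l, e l) = e i₁ + e i₂ :=
        Finset.sum_eq_add_of_mem i₁ i₂ (Finset.mem_univ _) (Finset.mem_univ _) hi
          (fun c _ hc => hiz c hc.1 hc.2)
      have hsum' : (∑ l, e' l) = e' j :=
        Finset.sum_eq_single_of_mem j (Finset.mem_univ j) (fun b _ hb => hjz b hb)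
      have hsumA : (∑ l, e l • a l) = e i₁ • a i₁ + e i₂ • a i₂ :=
        Finset.sum_eq_add_of_mem i₁ i₂ (Finset.mem_univ _) (Finset.mem_univ _) hi
          (fun c _ hc => by rw [hiz c hc.1 hc.2, zero_smul])
      have hsumA' : (∑ l, e' l • a l) = e' j • a j :=
        Finset.sum_eq_single_of_mem j (Finset.mem_univ j)
          (fun b _ hb => by rw [hjz b hb, zero_smul])
      rw [hsum, hsum'] at h1
      rw [hsumA, hsumA'] at h2
      have hbd : e i₁ + e i₂ = e' j := stmt11_castInj kp km (e i₁ + e i₂) (e' j)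
        (by have := he i₁; have := he i₂; omega)
        (by have := he i₁; have := he i₂; omega)
        (by have := he' j; omega) (by have := he' j; omega) h1
      exact stmt11_L3 a ha hA i₁ i₂ j hi (e i₁) (e i₂) (e' j) hi1 hi2 hj0
        (by have := he i₁; omega) (by have := he i₂; omega)
        (by have := he' j; omega) hbd h2
    · -- (2,2)
      obtain ⟨i₁, i₂, hi, hi1, hi2, hiz⟩ := stmt11_wt_two e hw
      obtain ⟨j₁, j₂, hj, hj1, hj2, hjz⟩ := stmt11_wt_two e' hw'
      have hsum : (∑ l, e l) = e i₁ + e i₂ :=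
        Finset.sum_eq_add_of_mem i₁ i₂ (Finset.mem_univ _) (Finset.mem_univ _) hi
          (fun c _ hc => hiz c hc.1 hc.2)
      have hsum' : (∑ l, e' l) = e' j₁ + e' j₂ :=
        Finset.sum_eq_add_of_mem j₁ j₂ (Finset.mem_univ _) (Finset.mem_univ _) hj
          (fun c _ hc => hjz c hc.1 hc.2)
      have hsumA : (∑ l, e l • a l) = e i₁ • a i₁ + e i₂ • a i₂ :=
        Finset.sum_eq_add_of_mem i₁ i₂ (Finset.mem_univ _) (Finset.mem_univ _) hi
          (fun c _ hc => by rw [hiz c hc.1 hc.2, zero_smul])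
      have hsumA' : (∑ l, e' l • a l) = e' j₁ • a j₁ + e' j₂ • a j₂ :=
        Finset.sum_eq_add_of_mem j₁ j₂ (Finset.mem_univ _) (Finset.mem_univ _) hj
          (fun c _ hc => by rw [hjz c hc.1 hc.2, zero_smul])
      rw [hsum, hsum'] at h1
      rw [hsumA, hsumA'] at h2
      have hbd : e i₁ + e i₂ = e' j₁ + e' j₂ :=
        stmt11_castInj kp km (e i₁ + e i₂) (e' j₁ + e' j₂)
          (by have := he i₁; have := he i₂; omega)
          (by have := he i₁; have := he i₂; omega)
          (by have := he' j₁; have := he' j₂; omega)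
          (by have := he' j₁; have := he' j₂; omega) h1
      rcases stmt11_L4 a ha hA i₁ i₂ j₁ j₂ hi hj (e i₁) (e i₂) (e' j₁) (e' j₂)
          hi1 hi2 hj1 hj2
          (by have := he i₁; omega) (by have := he i₂; omega)
          (by have := he' j₁; omega) (by have := he' j₂; omega) hbd h2 with
        ⟨hq1, hq2, hq3, hq4⟩ | ⟨hq1, hq2, hq3, hq4⟩
      · funext l
        by_cases hl1 : l = i₁
        · subst hl1; rw [hq3, ← hq1]
        · by_cases hl2 : l = i₂
          · subst hl2; rw [hq4, ← hq2]
          · have hlj1 : l ≠ j₁ := by rw [← hq1]; exact hl1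
            have hlj2 : l ≠ j₂ := by rw [← hq2]; exact hl2
            rw [hiz l hl1 hl2, hjz l hlj1 hlj2]
      · funext l
        by_cases hl1 : l = i₁
        · subst hl1; rw [hq3, ← hq1]
        · by_cases hl2 : l = i₂
          · subst hl2; rw [hq4, ← hq2]
          · have hlj1 : l ≠ j₁ := by rw [← hq2]; exact hl2
            have hlj2 : l ≠ j₂ := by rw [← hq1]; exact hl1
            rw [hiz l hl1 hl2, hjz l hlj1 hlj2]
end

section
/- Let 0 ≤ k_- ≤ k_+ ≤ 3 with k_+ + k_- ≥ 1, α = max(2k_+^2, 3), D ≥ 2, K ≥ 1 integers, and p ≡ ±5 (mod 12) a prime with (αK+1)^D ≤ p. For 0 ≤ m < DK^2, let C_m = {Σ_{i=0}^{D-1} x_i(αK+1)^i : 0 ≤ x_i ≤ K, Σ x_i^2 = m}. In G = Z_{3k_+ + 2k_- + 1} × Z_p × Z_p, let S_m = {(1, x, x^2 mod p) : x ∈ C_m}. Then M = [-k_-,k_+]\{0} partially 2-splits G with splitter set S_m. -/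
/-!
Both claims say that `e ↦ ∑ eᵢ (1, xᵢ, xᵢ²)` is injective on coefficient vectors of weight at
most `2` (compare with `e' = 0` for the first). Write `x = ∑ yⱼ Bʲ` with digit vector
`y ∈ [0, K]ᴰ` on the sphere `‖y‖² = m`, where `B = αK + 1`. The first coordinate, taken modulo
`3k₊ + 2k₋ + 1`, forces `∑ e = ∑ e'` exactly, so `δ = e - e'` satisfies `∑ δᵢ xᵢʲ ≡ 0 (mod p)`
for `j = 0, 1, 2`. If `δ` has at most three nonzero entries this contradicts the Vandermonde
determinant. Otherwise `a x₁ + b x₂ ≡ c x₃ + d x₄` and `a x₁² + b x₂² ≡ c x₃² + d x₄²` with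
`a + b = c + d`. Since `p ≥ Bᴰ`, any congruence `∑ λᵢ xᵢ ≡ 0` with `∑ |λᵢ| K < B` lifts to the
exact identity `∑ λᵢ yᵢ = 0` between digit vectors. Eliminating `x₃` leaves a binary quadratic
form in `x₁ - x₄, x₂ - x₄` of discriminant `abcd`; for the finitely many admissible `(a, b, c, d)`
it is definite, or has discriminant `3k²` with `3` a non-residue mod `p`, or splits into linear
factors with small coefficients. Each case forces three of the digit vectors onto a line, and a
line meets the sphere in at most two points.
-/

open Finset Matrix

theorem not_isSquare_three_of_mod_twelve {p : ℕ} [Fact p.Prime] (hp : p % 12 = 5 ∨ p % 12 = 7) :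
    ¬IsSquare (3 : ZMod p) := by
  have h3 : ((3 : ℕ) : ZMod p) = 3 := by norm_num
  have hp3 : (p : ZMod 3) = ((p % 3 : ℕ) : ZMod 3) := (ZMod.natCast_mod p 3).symm
  rw [← h3]
  rcases hp with hp | hp
  · rw [ZMod.exists_sq_eq_prime_iff_of_mod_four_eq_one (by omega) (by norm_num), hp3,
      show p % 3 = 2 by omega]
    unfold IsSquare; decide
  · rw [ZMod.exists_sq_eq_prime_iff_of_mod_four_eq_three (by omega) (by norm_num) (by omega),
      hp3, show p % 3 = 1 by omega, not_not]
    exact ⟨1, by decide⟩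

theorem eq_zero_of_abs_lt_of_intCast_eq_zero {p : ℕ} {A : ℤ} (hA : |A| < p)
    (h : (A : ZMod p) = 0) : A = 0 :=
  Int.eq_zero_of_abs_lt_dvd ((ZMod.intCast_zmod_eq_zero_iff_dvd A p).mp h) hA

theorem Finset.eq_zero_of_sum_mul_pow_eq_zero {ι R : Type*} [CommRing R] [IsDomain R]
    {s : Finset ι} {v f : ι → R} (hf : Set.InjOn f s)
    (h : ∀ k < #s, ∑ i ∈ s, v i * f i ^ k = 0) : ∀ i ∈ s, v i = 0 := by
  let g : Fin #s ≃ s := s.equivFin.symm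
  have hvg : (fun k => v (g k)) = 0 := by
    refine Matrix.eq_zero_of_forall_pow_sum_mul_pow_eq_zero (f := fun k => f (g k))
      (fun a b hab => g.injective (Subtype.ext (hf (g a).2 (g b).2 hab))) fun k => ?_
    rw [← h k k.2, ← s.sum_coe_sort]
    exact g.sum_comp fun i : s => v i * f i ^ (k : ℕ)
  intro i hi
  simpa [g] using congrFun hvg (s.equivFin ⟨i, hi⟩)

theorem abs_add_sub_add_le {R : Type*} [CommRing R] [LinearOrder R] [IsStrictOrderedRing R]
    {a b c d f₁ f₂ f₃ f₄ L K : R} (hsum : a + b = c + d)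
    (hw : ∀ w ∈ [a, b, c, d], |w| ≤ L) (hf : ∀ f ∈ [f₁, f₂, f₃, f₄], 0 ≤ f ∧ f ≤ K) :
    |a * f₁ + b * f₂ - (c * f₃ + d * f₄)| ≤ 2 * L * K := by
  simp only [List.mem_cons, List.not_mem_nil, or_false, forall_eq_or_imp, forall_eq] at hw hf
  have centered : ∀ w f, |w| ≤ L → 0 ≤ f ∧ f ≤ K → |w * (2 * f - K)| ≤ L * K :=
    fun w f hw hf => by
      rw [abs_mul]
      exact mul_le_mul hw (abs_le.mpr ⟨by linarith, by linarith⟩) (abs_nonneg _)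
        ((abs_nonneg _).trans hw)
  have h₁ := abs_le.mp (centered a f₁ hw.1 hf.1)
  have h₂ := abs_le.mp (centered b f₂ hw.2.1 hf.2.1)
  have h₃ := abs_le.mp (centered c f₃ hw.2.2.1 hf.2.2.1)
  have h₄ := abs_le.mp (centered d f₄ hw.2.2.2 hf.2.2.2)
  -- centring each `fᵢ` at `K / 2` costs nothing because the coefficients sum to zero
  have hc : 2 * (a * f₁ + b * f₂ - (c * f₃ + d * f₄)) =
      a * (2 * f₁ - K) + b * (2 * f₂ - K) - (c * (2 * f₃ - K) + d * (2 * f₄ - K)) := by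
    linear_combination K * hsum
  rw [abs_le]
  constructor <;> nlinarith

section Digits

variable {D p : ℕ} {B K : ℤ}

theorem eq_zero_of_abs_lt_of_sum_mul_pow_eq_zero {g : Fin D → ℤ} (hg : ∀ j, |g j| < B)
    (h : ∑ j, g j * B ^ (j : ℕ) = 0) : g = 0 := by
  induction D with
  | zero => exact Subsingleton.elim _ _
  | succ D ih =>
    have hsplit : g 0 + B * ∑ j : Fin D, g j.succ * B ^ (j : ℕ) = 0 := by
      rw [← h, Fin.sum_univ_succ, mul_sum]
      simp only [Fin.val_zero, pow_zero, mul_one, Fin.val_succ, pow_succ]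
      congr 1; exact sum_congr rfl fun j _ => by ring
    have h0 : g 0 = 0 :=
      Int.eq_zero_of_abs_lt_dvd ⟨-∑ j : Fin D, g j.succ * B ^ (j : ℕ), by linarith⟩ (hg 0)
    have htail : g ∘ Fin.succ = 0 := by
      refine ih (fun j => hg j.succ) ?_
      have hB : B ≠ 0 := ((abs_nonneg _).trans_lt (hg 0)).ne'
      simpa [h0, hB] using hsplit
    ext j
    cases j using Fin.cases with
    | zero => exact h0
    | succ j => exact congrFun htail j

theorem abs_sum_mul_pow_le {g : Fin D → ℤ} (hg : ∀ j, |g j| < B) :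
    |∑ j, g j * B ^ (j : ℕ)| ≤ B ^ D - 1 := by
  calc |∑ j, g j * B ^ (j : ℕ)| ≤ ∑ j : Fin D, (B - 1) * B ^ (j : ℕ) := by
        refine (abs_sum_le_sum_abs _ _).trans (sum_le_sum fun j _ => ?_)
        have hB : 0 ≤ B := (abs_nonneg _).trans (hg j).le
        rw [abs_mul, abs_pow, abs_of_nonneg hB]
        exact mul_le_mul_of_nonneg_right (by linarith [hg j]) (by positivity)
    _ = B ^ D - 1 := by
        rw [← mul_sum, Fin.sum_univ_eq_sum_range (B ^ ·), mul_comm, geom_sum_mul]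

def digitValue (p : ℕ) (B : ℤ) : (Fin D → ℤ) →+ ZMod p where
  toFun g := ((∑ j, g j * B ^ (j : ℕ) : ℤ) : ZMod p)
  map_zero' := by simp
  map_add' g h := by simp [add_mul, sum_add_distrib]

theorem eq_of_digitValue_eq (hBp : B ^ D ≤ p) {g h : Fin D → ℤ}
    (hgh : ∀ j, |g j - h j| < B) (he : digitValue p B g = digitValue p B h) : g = h := by
  rw [← sub_eq_zero, ← map_sub] at he
  have hlt : |∑ j, (g - h) j * B ^ (j : ℕ)| < p := (abs_sum_mul_pow_le hgh).trans_lt (by linarith)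
  exact sub_eq_zero.mp (eq_zero_of_abs_lt_of_sum_mul_pow_eq_zero hgh
    (eq_zero_of_abs_lt_of_intCast_eq_zero hlt he))

theorem smul_add_smul_eq_of_digitValue {L : ℤ} (hBp : B ^ D ≤ p) (hKB : 2 * L * K < B)
    {a b c d : ℤ} (hsum : a + b = c + d) (hcoef : ∀ w ∈ [a, b, c, d], |w| ≤ L)
    {P₁ P₂ P₃ P₄ : Fin D → ℤ} (hbox : ∀ P ∈ [P₁, P₂, P₃, P₄], ∀ j, 0 ≤ P j ∧ P j ≤ K)
    (h : a * digitValue p B P₁ + b * digitValue p B P₂ =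
      c * digitValue p B P₃ + d * digitValue p B P₄) :
    a • P₁ + b • P₂ = c • P₃ + d • P₄ := by
  refine eq_of_digitValue_eq hBp (fun j => ?_) ?_
  · simp only [List.mem_cons, List.not_mem_nil, or_false, forall_eq_or_imp, forall_eq] at hbox
    exact (abs_add_sub_add_le hsum hcoef (by simp [hbox])).trans_lt hKB
  · simp only [map_add, map_zsmul]
    simpa only [zsmul_eq_mul] using h

end Digits

section Sphere

variable {R ι : Type*} [CommRing R] [Fintype ι]

theorem two_mul_dotProduct_sub_add_dotProduct_sub_eq_zero {P O : ι → R}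
    (hP : P ⬝ᵥ P = O ⬝ᵥ O) : 2 * (O ⬝ᵥ (P - O)) + (P - O) ⬝ᵥ (P - O) = 0 := by
  simp only [dotProduct_sub, sub_dotProduct, dotProduct_comm O P, hP]; ring

/-- A line meets a sphere in at most two points. -/
theorem eq_or_eq_or_eq_of_smul_sub_eq_smul_sub [LinearOrder R] [IsStrictOrderedRing R]
    {P Q O : ι → R} {s t : R} (hst : s ≠ 0 ∨ t ≠ 0) (hP : P ⬝ᵥ P = O ⬝ᵥ O)
    (hQ : Q ⬝ᵥ Q = O ⬝ᵥ O) (h : s • (P - O) = t • (Q - O)) :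
    P = O ∨ Q = O ∨ P = Q := by
  have hφ := two_mul_dotProduct_sub_add_dotProduct_sub_eq_zero hP
  have hψ := two_mul_dotProduct_sub_add_dotProduct_sub_eq_zero hQ
  set φ := P - O
  set ψ := Q - O
  have hlin : s * (O ⬝ᵥ φ) = t * (O ⬝ᵥ ψ) := by
    simpa only [dotProduct_smul, smul_eq_mul] using congrArg (O ⬝ᵥ ·) h
  have hsq : s ^ 2 * (φ ⬝ᵥ φ) = t ^ 2 * (ψ ⬝ᵥ ψ) := by
    have := congrArg (fun v => v ⬝ᵥ v) h
    simp only [smul_dotProduct, dotProduct_smul, smul_eq_mul] at this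
    linear_combination this
  have key : t * (s - t) * (ψ ⬝ᵥ ψ) = 0 := by
    linear_combination hsq - s * (s * hφ - t * hψ - 2 * hlin)
  rcases mul_eq_zero.mp key with hts | hψ0
  · rcases mul_eq_zero.mp hts with ht | hst'
    · left
      rw [ht, zero_smul, smul_eq_zero] at h
      exact sub_eq_zero.mp (h.resolve_left (hst.resolve_right (not_not.mpr ht)))
    · right; right
      rw [sub_eq_zero.mp hst'] at h
      have ht : t ≠ 0 := by rintro rfl; simp_all
      exact sub_left_injective (smul_right_injective _ ht h)
  · right; left
    exact sub_eq_zero.mp (dotProduct_self_eq_zero.mp hψ0)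

theorem quadForm_dotProduct_eq_zero {O P₁ P₂ P₃ : ι → R} {a b c : R}
    (h₁ : P₁ ⬝ᵥ P₁ = O ⬝ᵥ O) (h₂ : P₂ ⬝ᵥ P₂ = O ⬝ᵥ O) (h₃ : P₃ ⬝ᵥ P₃ = O ⬝ᵥ O)
    (hlin : a • (P₁ - O) + b • (P₂ - O) = c • (P₃ - O)) :
    a * (c - a) * ((P₁ - O) ⬝ᵥ (P₁ - O)) - 2 * a * b * ((P₁ - O) ⬝ᵥ (P₂ - O))
      + b * (c - b) * ((P₂ - O) ⬝ᵥ (P₂ - O)) = 0 := by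
  have e₁ := two_mul_dotProduct_sub_add_dotProduct_sub_eq_zero h₁
  have e₂ := two_mul_dotProduct_sub_add_dotProduct_sub_eq_zero h₂
  have e₃ := two_mul_dotProduct_sub_add_dotProduct_sub_eq_zero h₃
  set φ₁ := P₁ - O
  set φ₂ := P₂ - O
  set φ₃ := P₃ - O
  have hO : a * (O ⬝ᵥ φ₁) + b * (O ⬝ᵥ φ₂) = c * (O ⬝ᵥ φ₃) := by
    simpa only [dotProduct_add, dotProduct_smul, smul_eq_mul] using congrArg (O ⬝ᵥ ·) hlin
  have hsq : a ^ 2 * (φ₁ ⬝ᵥ φ₁) + 2 * a * b * (φ₁ ⬝ᵥ φ₂) + b ^ 2 * (φ₂ ⬝ᵥ φ₂)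
      = c ^ 2 * (φ₃ ⬝ᵥ φ₃) := by
    have := congrArg (fun v => v ⬝ᵥ v) hlin
    simp only [dotProduct_add, add_dotProduct, smul_dotProduct, dotProduct_smul, smul_eq_mul,
      dotProduct_comm φ₂ φ₁] at this
    linear_combination this
  linear_combination c * (a * e₁ + b * e₂ - c * e₃ - 2 * hO) - hsq

theorem eq_zero_of_quadForm_dotProduct_eq_zero [LinearOrder R] [IsStrictOrderedRing R]
    {a b c d : R} {φ ψ : ι → R} (hsum : a + b = c + d) (hneg : a * b * c * d < 0)
    (hQ : a * (c - a) * (φ ⬝ᵥ φ) - 2 * a * b * (φ ⬝ᵥ ψ) + b * (c - b) * (ψ ⬝ᵥ ψ) = 0) :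
    ψ = 0 := by
  set v := (2 * a * (c - a)) • φ - (2 * a * b) • ψ
  have hv : v ⬝ᵥ v = 4 * (a * b * c * d) * (ψ ⬝ᵥ ψ) := by
    simp only [v, dotProduct_sub, sub_dotProduct, smul_dotProduct, dotProduct_smul, smul_eq_mul,
      dotProduct_comm ψ φ]
    linear_combination 4 * a * (c - a) * hQ + 4 * a * b * c * (ψ ⬝ᵥ ψ) * hsum
  have hnonneg : ∀ w : ι → R, 0 ≤ w ⬝ᵥ w := fun w => sum_nonneg fun i _ => mul_self_nonneg (w i)
  have hψ : ψ ⬝ᵥ ψ = 0 := le_antisymm (by nlinarith [hnonneg v, hnonneg ψ]) (hnonneg ψ)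
  exact dotProduct_self_eq_zero.mp hψ

end Sphere

section QuadForm

variable {R : Type*} [CommRing R]

/-- The discriminant `(ab)² - a(c - a)·b(c - b)` of this form is `abcd` when `a + b = c + d`. -/
def quadForm (a b c s t : R) : R :=
  a * (c - a) * s ^ 2 - 2 * a * b * s * t + b * (c - b) * t ^ 2

theorem quadForm_sub_eq_zero {a b c d x₁ x₂ x₃ x₄ : R} (hsum : a + b = c + d)
    (hlin : a * x₁ + b * x₂ = c * x₃ + d * x₄)
    (hquad : a * x₁ ^ 2 + b * x₂ ^ 2 = c * x₃ ^ 2 + d * x₄ ^ 2) :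
    quadForm a b c (x₁ - x₄) (x₂ - x₄) = 0 := by
  have hL : a * (x₁ - x₄) + b * (x₂ - x₄) = c * (x₃ - x₄) := by
    linear_combination hlin - x₄ * hsum
  have hM : a * (x₁ - x₄) ^ 2 + b * (x₂ - x₄) ^ 2 = c * (x₃ - x₄) ^ 2 := by
    linear_combination hquad - 2 * x₄ * hlin + x₄ ^ 2 * hsum
  unfold quadForm
  linear_combination c * hM - (a * (x₁ - x₄) + b * (x₂ - x₄) + c * (x₃ - x₄)) * hL

theorem quadForm_mul_eq {a b c d k : R} (hsum : a + b = c + d) (habcd : a * b * c * d = k ^ 2)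
    (s t : R) :
    a * (c - a) * quadForm a b c s t =
      (a * (c - a) * s - (a * b - k) * t) * (a * (c - a) * s - (a * b + k) * t) := by
  unfold quadForm
  linear_combination (-t ^ 2) * habcd + (-a * b * c * t ^ 2) * hsum

theorem two_mul_mul_eq_zero_of_quadForm_eq_zero {F : Type*} [Field F] (h3 : ¬IsSquare (3 : F))
    {a b c d k s t : F} (hsum : a + b = c + d) (habcd : a * b * c * d = 3 * k ^ 2)
    (hQ : quadForm a b c s t = 0) : 2 * k * t = 0 := by
  have hsq : (2 * a * (c - a) * s - 2 * a * b * t) ^ 2 = 3 * (2 * k * t) ^ 2 := by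
    unfold quadForm at hQ
    linear_combination 4 * a * (c - a) * hQ + 4 * t ^ 2 * habcd + 4 * a * b * c * t ^ 2 * hsum
  by_contra hkt
  refine h3 ⟨(2 * a * (c - a) * s - 2 * a * b * t) / (2 * k * t), ?_⟩
  rw [div_mul_div_comm, ← sq, ← sq, hsq, mul_div_assoc, div_self (pow_ne_zero 2 hkt), mul_one]

end QuadForm

def SmallRatio (α A r : ℤ) : Prop :=
  |A / (A.gcd r : ℤ)| + |r / (A.gcd r : ℤ)| ≤ α

/-- The discriminant `abcd` of `quadForm a b c` is negative (the form is definite), or `3` times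
a square, or a square such that both roots of the form have small height. -/
def QuadCase (α a b c d : ℤ) : Prop :=
  a * b * c * d < 0 ∨
  (∃ k ∈ Icc 1 α, a * b * c * d = 3 * k ^ 2 ∧ 2 * k ≤ α) ∨
  (∃ k ∈ Icc 1 α, a * b * c * d = k ^ 2 ∧
    SmallRatio α (a * (c - a)) (a * b - k) ∧ SmallRatio α (a * (c - a)) (a * b + k))

theorem quadCase_table : ∀ kp ∈ Icc (1 : ℤ) 3, ∀ km ∈ Icc 0 kp,
    ∀ a ∈ Icc (-km) kp, ∀ b ∈ Icc (-km) kp, ∀ c ∈ Icc (-km) kp, ∀ d ∈ Icc (-km) kp,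
    a ≠ 0 → b ≠ 0 → c ≠ 0 → d ≠ 0 → a + b = c + d → c ≠ a → c ≠ b →
    QuadCase (max (2 * kp ^ 2) 3) a b c d := by
  unfold QuadCase SmallRatio
  decide

section FourPoints

variable {D p : ℕ} [Fact p.Prime] {B K α : ℤ}

local notation "ν" => digitValue p B

theorem exists_smul_eq_smul_of_smallRatio (hBp : B ^ D ≤ p) (hKB : α * K < B) {A r : ℤ}
    (hA : (A : ZMod p) ≠ 0) (hAr : SmallRatio α A r) {φ ψ : Fin D → ℤ}
    (hφ : ∀ j, |φ j| ≤ K) (hψ : ∀ j, |ψ j| ≤ K) (h : A * ν φ = r * ν ψ) :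
    ∃ A' r' : ℤ, A' ≠ 0 ∧ A' • φ = r' • ψ := by
  set g : ℤ := (A.gcd r : ℤ)
  have hgA : g * (A / g) = A := Int.mul_ediv_cancel' (Int.gcd_dvd_left A r)
  have hgr : g * (r / g) = r := Int.mul_ediv_cancel' (Int.gcd_dvd_right A r)
  have hg : (g : ZMod p) ≠ 0 := fun h0 => hA (by rw [← hgA, Int.cast_mul, h0, zero_mul])
  have h' : (A / g : ℤ) * ν φ = (r / g : ℤ) * ν ψ := by
    refine mul_left_cancel₀ hg ?_
    rw [← hgA, ← hgr] at h
    push_cast at h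
    linear_combination h
  refine ⟨A / g, r / g, fun h0 => hA (by rw [← hgA, h0, mul_zero, Int.cast_zero]), ?_⟩
  refine eq_of_digitValue_eq hBp (fun j => ?_)
    (by rw [map_zsmul, map_zsmul, zsmul_eq_mul, zsmul_eq_mul]; exact h')
  have hK : 0 ≤ K := (abs_nonneg _).trans (hφ j)
  calc |((A / g) • φ) j - ((r / g) • ψ) j|
      ≤ |A / g| * |φ j| + |r / g| * |ψ j| := by
        simp only [Pi.smul_apply, smul_eq_mul, ← abs_mul]; exact abs_sub _ _
    _ ≤ (|A / g| + |r / g|) * K := by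
        rw [add_mul]; gcongr; exacts [hφ j, hψ j]
    _ ≤ α * K := mul_le_mul_of_nonneg_right hAr hK
    _ < B := hKB

theorem eq_zero_of_quadForm_eq_zero_of_eq_three_mul_sq (hsq3 : ¬IsSquare (3 : ZMod p))
    (hBp : B ^ D ≤ p) (hKB : α * K < B) {a b c d k : ℤ} (hsum : a + b = c + d)
    (habcd : a * b * c * d = 3 * k ^ 2) (hk : 1 ≤ k) (h2k : 2 * k ≤ α) {s : ZMod p}
    {ψ : Fin D → ℤ} (hψ : ∀ j, |ψ j| ≤ K) (hQ : quadForm (a : ZMod p) b c s (ν ψ) = 0) :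
    ψ = 0 := by
  have hsum' : (a : ZMod p) + b = c + d := by exact_mod_cast congrArg (Int.cast : ℤ → ZMod p) hsum
  have habcd' : (a : ZMod p) * b * c * d = 3 * (k : ZMod p) ^ 2 := by
    exact_mod_cast congrArg (Int.cast : ℤ → ZMod p) habcd
  have hkψ := two_mul_mul_eq_zero_of_quadForm_eq_zero hsq3 hsum' habcd' hQ
  have h2kψ : (2 * k) • ψ = 0 := by
    refine eq_of_digitValue_eq hBp (fun j => ?_) ?_
    · rw [Pi.zero_apply, sub_zero, Pi.smul_apply, smul_eq_mul, abs_mul]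
      calc |2 * k| * |ψ j| ≤ α * K :=
            mul_le_mul (by rwa [abs_of_pos (by omega)]) (hψ j) (abs_nonneg _) (by omega)
        _ < B := hKB
    · rw [map_zsmul, map_zero, zsmul_eq_mul]; push_cast; exact hkψ
  exact (smul_eq_zero.mp h2kψ).resolve_left (by omega)

theorem exists_smul_eq_smul_of_quadForm_eq_zero_of_eq_sq (hBp : B ^ D ≤ p) (hKB : α * K < B)
    {a b c d k : ℤ} (hsum : a + b = c + d) (habcd : a * b * c * d = k ^ 2)
    (hA : ((a * (c - a) : ℤ) : ZMod p) ≠ 0) (hr₁ : SmallRatio α (a * (c - a)) (a * b - k))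
    (hr₂ : SmallRatio α (a * (c - a)) (a * b + k)) {φ ψ : Fin D → ℤ} (hφ : ∀ j, |φ j| ≤ K)
    (hψ : ∀ j, |ψ j| ≤ K) (hQ : quadForm (a : ZMod p) b c (ν φ) (ν ψ) = 0) :
    ∃ A' r' : ℤ, A' ≠ 0 ∧ A' • φ = r' • ψ := by
  have hsum' : (a : ZMod p) + b = c + d := by exact_mod_cast congrArg (Int.cast : ℤ → ZMod p) hsum
  have habcd' : (a : ZMod p) * b * c * d = (k : ZMod p) ^ 2 := by
    exact_mod_cast congrArg (Int.cast : ℤ → ZMod p) habcd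
  have hprod := quadForm_mul_eq hsum' habcd' (ν φ) (ν ψ)
  rw [hQ, mul_zero] at hprod
  rcases mul_eq_zero.mp hprod.symm with h | h
  · exact exists_smul_eq_smul_of_smallRatio hBp hKB hA hr₁ hφ hψ
      (by push_cast; linear_combination h)
  · exact exists_smul_eq_smul_of_smallRatio hBp hKB hA hr₂ hφ hψ
      (by push_cast; linear_combination h)

theorem eq_or_eq_or_eq_of_quadCase (hsq3 : ¬IsSquare (3 : ZMod p)) (hBp : B ^ D ≤ p)
    (hKB : α * K < B) {P₁ P₂ P₃ O : Fin D → ℤ}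
    (hbox : ∀ P ∈ [P₁, P₂, P₃, O], ∀ j, 0 ≤ P j ∧ P j ≤ K) {ρ : ℤ}
    (hsphere : ∀ P ∈ [P₁, P₂, P₃, O], P ⬝ᵥ P = ρ) {a b c d : ℤ} (hcase : QuadCase α a b c d)
    (hsum : a + b = c + d) (hA : ((a * (c - a) : ℤ) : ZMod p) ≠ 0)
    (hlin : a • P₁ + b • P₂ = c • P₃ + d • O)
    (hquad : a * ν P₁ ^ 2 + b * ν P₂ ^ 2 = c * ν P₃ ^ 2 + d * ν O ^ 2) :
    P₁ = O ∨ P₂ = O ∨ P₁ = P₂ := by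
  simp only [List.mem_cons, List.not_mem_nil, or_false, forall_eq_or_imp, forall_eq] at hbox hsphere
  obtain ⟨hb₁, hb₂, -, hbO⟩ := hbox
  obtain ⟨hs₁, hs₂, hs₃, hsO⟩ := hsphere
  have hφ : ∀ P : Fin D → ℤ, (∀ j, 0 ≤ P j ∧ P j ≤ K) → ∀ j, |(P - O) j| ≤ K :=
    fun P hP j => abs_sub_le_of_nonneg_of_le (hP j).1 (hP j).2 (hbO j).1 (hbO j).2
  have hQ : quadForm (a : ZMod p) b c (ν (P₁ - O)) (ν (P₂ - O)) = 0 := by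
    rw [map_sub, map_sub]
    refine quadForm_sub_eq_zero
      (by exact_mod_cast congrArg (Int.cast : ℤ → ZMod p) hsum) ?_ hquad
    have := congrArg ν hlin
    simp only [map_add, map_zsmul] at this
    simpa only [zsmul_eq_mul] using this
  rcases hcase with hneg | ⟨k, hk, habcd, h2k⟩ | ⟨k, -, habcd, hr₁, hr₂⟩
  · have hlin' : a • (P₁ - O) + b • (P₂ - O) = c • (P₃ - O) := by
      linear_combination (norm := module) hlin - hsum • O
    exact Or.inr (Or.inl (sub_eq_zero.mp (eq_zero_of_quadForm_dotProduct_eq_zero hsum hneg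
      (quadForm_dotProduct_eq_zero (hs₁.trans hsO.symm) (hs₂.trans hsO.symm)
        (hs₃.trans hsO.symm) hlin'))))
  · exact Or.inr (Or.inl (sub_eq_zero.mp (eq_zero_of_quadForm_eq_zero_of_eq_three_mul_sq hsq3 hBp
      hKB hsum habcd (mem_Icc.mp hk).1 h2k (hφ P₂ hb₂) hQ)))
  · obtain ⟨A', r', hA', hpar⟩ := exists_smul_eq_smul_of_quadForm_eq_zero_of_eq_sq hBp hKB hsum
      habcd hA hr₁ hr₂ (hφ P₁ hb₁) (hφ P₂ hb₂) hQ
    exact eq_or_eq_or_eq_of_smul_sub_eq_smul_sub (Or.inl hA') (hs₁.trans hsO.symm)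
      (hs₂.trans hsO.symm) hpar

theorem eq_or_eq_or_eq_of_eq_coeffs (hBp : B ^ D ≤ p) (hKB : 2 * K < B)
    {P₁ P₂ P₃ O : Fin D → ℤ} (hbox : ∀ P ∈ [P₁, P₂, P₃, O], ∀ j, 0 ≤ P j ∧ P j ≤ K) {ρ : ℤ}
    (hsphere : ∀ P ∈ [P₁, P₂, P₃, O], P ⬝ᵥ P = ρ) {a b : ℤ} (ha : (a : ZMod p) ≠ 0)
    (hlin : a • P₁ + b • P₂ = a • P₃ + b • O)
    (hquad : a * ν P₁ ^ 2 + b * ν P₂ ^ 2 = a * ν P₃ ^ 2 + b * ν O ^ 2) :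
    P₁ = O ∨ P₃ = O ∨ P₁ = P₃ := by
  simp only [List.mem_cons, List.not_mem_nil, or_false, forall_eq_or_imp, forall_eq] at hbox hsphere
  obtain ⟨hb₁, hb₂, hb₃, hbO⟩ := hbox
  obtain ⟨hs₁, -, hs₃, hsO⟩ := hsphere
  have hlinp : a * ν P₁ + b * ν P₂ = a * ν P₃ + b * ν O := by
    have := congrArg ν hlin
    simp only [map_add, map_zsmul] at this
    simpa only [zsmul_eq_mul] using this
  have hfac : a * (ν P₁ - ν P₃) * (ν P₁ + ν P₃ - ν P₂ - ν O) = 0 := by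
    linear_combination hquad - (ν P₂ + ν O) * hlinp
  rcases mul_eq_zero.mp hfac with h₁₃ | hpar
  · refine Or.inr (Or.inr (eq_of_digitValue_eq hBp (fun j => ?_)
      (sub_eq_zero.mp ((mul_eq_zero.mp h₁₃).resolve_left ha))))
    obtain ⟨h₁, h₁'⟩ := hb₁ j
    exact (abs_sub_le_of_nonneg_of_le h₁ h₁' (hb₃ j).1 (hb₃ j).2).trans_lt (by linarith)
  have hpar : P₁ + P₃ = P₂ + O := by
    refine eq_of_digitValue_eq hBp (fun j => ?_) (by rw [map_add, map_add]; linear_combination hpar)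
    obtain ⟨h₁, h₁'⟩ := hb₁ j
    obtain ⟨h₂, h₂'⟩ := hb₂ j
    obtain ⟨h₃, h₃'⟩ := hb₃ j
    obtain ⟨h₄, h₄'⟩ := hbO j
    simp only [Pi.add_apply]
    rw [abs_lt]; constructor <;> linarith
  have hcol : (a + b) • (P₁ - O) = (a - b) • (P₃ - O) := by
    linear_combination (norm := module) hlin + b • hpar
  have hab : a + b ≠ 0 ∨ a - b ≠ 0 := by
    by_contra! h
    exact ha (by rw [show a = 0 by linarith [h.1, h.2], Int.cast_zero])
  exact eq_or_eq_or_eq_of_smul_sub_eq_smul_sub hab (hs₁.trans hsO.symm) (hs₃.trans hsO.symm) hcol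

theorem abs_mul_sub_le {kp km a c : ℤ} (hkm : km ≤ kp) (ha : a ∈ Icc (-km) kp)
    (hc : c ∈ Icc (-km) kp) : |a * (c - a)| ≤ 2 * kp ^ 2 := by
  obtain ⟨ha₁, ha₂⟩ := mem_Icc.mp ha
  obtain ⟨hc₁, hc₂⟩ := mem_Icc.mp hc
  rw [abs_mul, sq]
  calc |a| * |c - a| ≤ kp * (2 * kp) :=
        mul_le_mul (abs_le.mpr ⟨by omega, ha₂⟩) (abs_le.mpr ⟨by omega, by omega⟩) (abs_nonneg _)
          (by omega)
    _ = 2 * (kp * kp) := by ring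

theorem false_of_four_points {kp km : ℤ} (hsq3 : ¬IsSquare (3 : ZMod p)) (hkp : kp ∈ Icc 1 3)
    (hkm : km ∈ Icc 0 kp) (hK : 0 ≤ K) (hBp : B ^ D ≤ p) (hαp : max (2 * kp ^ 2) 3 < (p : ℤ))
    (hKB : max (2 * kp ^ 2) 3 * K < B) {P₁ P₂ P₃ P₄ : Fin D → ℤ} (hP : [P₁, P₂, P₃, P₄].Nodup)
    (hbox : ∀ P ∈ [P₁, P₂, P₃, P₄], ∀ j, 0 ≤ P j ∧ P j ≤ K) {ρ : ℤ}
    (hsphere : ∀ P ∈ [P₁, P₂, P₃, P₄], P ⬝ᵥ P = ρ) {a b c d : ℤ}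
    (hcoef : ∀ w ∈ [a, b, c, d], w ≠ 0 ∧ w ∈ Icc (-km) kp) (hsum : a + b = c + d)
    (hlin : a * ν P₁ + b * ν P₂ = c * ν P₃ + d * ν P₄)
    (hquad : a * ν P₁ ^ 2 + b * ν P₂ ^ 2 = c * ν P₃ ^ 2 + d * ν P₄ ^ 2) : False := by
  set α := max (2 * kp ^ 2) 3
  obtain ⟨hkp₁, hkp₃⟩ := mem_Icc.mp hkp
  have hα : 2 * kp ^ 2 ≤ α ∧ 3 ≤ α := ⟨le_max_left _ _, le_max_right _ _⟩
  have hcoef' := hcoef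
  simp only [List.mem_cons, List.not_mem_nil, or_false, forall_eq_or_imp, forall_eq] at hcoef'
  obtain ⟨⟨ha₀, ha⟩, ⟨hb₀, hb⟩, ⟨hc₀, hc⟩, ⟨hd₀, hd⟩⟩ := hcoef'
  simp only [List.nodup_cons, List.mem_cons, List.not_mem_nil, or_false, not_or] at hP
  obtain ⟨⟨h₁₂, h₁₃, h₁₄⟩, ⟨-, h₂₄⟩, h₃₄, -⟩ := hP
  have hlinv : a • P₁ + b • P₂ = c • P₃ + d • P₄ := by
    refine smul_add_smul_eq_of_digitValue (L := kp) hBp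
      ((mul_le_mul_of_nonneg_right (by nlinarith) hK).trans_lt hKB) hsum (fun w hw => ?_) hbox hlin
    obtain ⟨hw₁, hw₂⟩ := mem_Icc.mp (hcoef w hw).2
    exact abs_le.mpr ⟨by linarith [(mem_Icc.mp hkm).2], hw₂⟩
  have hunit : ∀ A : ℤ, A ≠ 0 → |A| ≤ α → (A : ZMod p) ≠ 0 := fun A hA hAα h0 =>
    hA (eq_zero_of_abs_lt_of_intCast_eq_zero (hAα.trans_lt hαp) h0)
  have ha_unit : (a : ZMod p) ≠ 0 := hunit a ha₀ <| by
    obtain ⟨ha₁, ha₂⟩ := mem_Icc.mp ha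
    exact abs_le.mpr ⟨by linarith [(mem_Icc.mp hkm).2], by linarith⟩
  have h2K : 2 * K < B := (mul_le_mul_of_nonneg_right (by omega) hK).trans_lt hKB
  by_cases hca : c = a
  · obtain rfl : d = b := by omega
    subst hca
    rcases eq_or_eq_or_eq_of_eq_coeffs hBp h2K hbox hsphere ha_unit hlinv hquad with h | h | h
    exacts [h₁₄ h, h₃₄ h, h₁₃ h]
  by_cases hcb : c = b
  · obtain rfl : d = a := by omega
    subst hcb
    have hperm : [P₁, P₂, P₄, P₃] ⊆ [P₁, P₂, P₃, P₄] :=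
      (((List.Perm.swap P₃ P₄ []).cons P₂).cons P₁).subset
    rcases eq_or_eq_or_eq_of_eq_coeffs hBp h2K (fun P hP => hbox P (hperm hP))
      (fun P hP => hsphere P (hperm hP)) ha_unit (by rw [hlinv, add_comm])
      (by rw [hquad, add_comm]) with h | h | h
    exacts [h₁₃ h, h₃₄ h.symm, h₁₄ h]
  rcases eq_or_eq_or_eq_of_quadCase hsq3 hBp hKB hbox hsphere
      (quadCase_table kp hkp km hkm a ha b hb c hc d hd ha₀ hb₀ hc₀ hd₀ hsum hca hcb) hsum
      (hunit _ (mul_ne_zero ha₀ (sub_ne_zero.mpr hca))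
        ((abs_mul_sub_le (mem_Icc.mp hkm).2 ha hc).trans hα.1))
      hlinv hquad with h | h | h
  exacts [h₁₄ h, h₂₄ h, h₁₂ h]

end FourPoints

section Weights

variable {n : ℕ}

theorem sum_mem_Icc_of_wt_le {e : Fin n → ℤ} {l u : ℤ} (he : ∀ i, -l ≤ e i ∧ e i ≤ u) :
    ∑ i, e i ∈ Set.Icc (-(wt e * l)) (wt e * u) := by
  rw [← sum_filter_ne_zero]
  constructor
  · simpa [wt] using card_nsmul_le_sum (univ.filter fun i => e i ≠ 0) e (-l) fun i _ => (he i).1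
  · simpa [wt] using sum_le_card_nsmul (univ.filter fun i => e i ≠ 0) e u fun i _ => (he i).2

theorem sum_eq_sum_of_intCast_sum_eq {q : ℕ} {kp km : ℤ} (hkp : 0 ≤ kp) (hkm : 0 ≤ km)
    (hq : 2 * (kp + km) < q) {e e' : Fin n → ℤ} (he : ∀ i, -km ≤ e i ∧ e i ≤ kp)
    (hwt : wt e ≤ 2) (he' : ∀ i, -km ≤ e' i ∧ e' i ≤ kp) (hwt' : wt e' ≤ 2)
    (h : ((∑ i, e i : ℤ) : ZMod q) = ((∑ i, e' i : ℤ) : ZMod q)) :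
    ∑ i, e i = ∑ i, e' i := by
  obtain ⟨h₁, h₁'⟩ := sum_mem_Icc_of_wt_le he
  obtain ⟨h₂, h₂'⟩ := sum_mem_Icc_of_wt_le he'
  rw [← sub_eq_zero, ← Int.cast_sub] at h
  have := eq_zero_of_abs_lt_of_intCast_eq_zero (abs_lt.mpr ⟨by nlinarith, by nlinarith⟩) h
  linarith

theorem sum_zsmul_eq_of_support_eq_pair {M : Type*} [AddCommGroup M] {e : Fin n → ℤ}
    {i₁ i₂ : Fin n} (hne : i₁ ≠ i₂) (h : univ.filter (fun i => e i ≠ 0) = {i₁, i₂})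
    (v : Fin n → M) : ∑ i, e i • v i = e i₁ • v i₁ + e i₂ • v i₂ := by
  rw [← sum_filter_of_ne (p := fun i => e i ≠ 0) fun i _ hi h0 => hi (by rw [h0, zero_smul]), h,
    sum_pair hne]

theorem exists_support_eq_pair_of_three_lt_wt_sub {e e' : Fin n → ℤ} (hwt : wt e ≤ 2)
    (hwt' : wt e' ≤ 2) (hd : 3 < wt (e - e')) :
    ∃ i₁ i₂ i₃ i₄, [i₁, i₂, i₃, i₄].Nodup ∧ univ.filter (fun i => e i ≠ 0) = {i₁, i₂} ∧
      univ.filter (fun i => e' i ≠ 0) = {i₃, i₄} := by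
  set S := univ.filter fun i => e i ≠ 0
  set S' := univ.filter fun i => e' i ≠ 0
  have hsub : univ.filter (fun i => (e - e') i ≠ 0) ⊆ S ∪ S' := by
    intro i hi
    simp only [mem_filter, mem_univ, true_and, Pi.sub_apply, mem_union, S, S'] at hi ⊢
    by_contra! h0
    exact hi (by rw [h0.1, h0.2, sub_zero])
  have h4 : 4 ≤ #(S ∪ S') := hd.trans_le (card_le_card hsub)
  have hS : #S ≤ 2 := hwt
  have hS' : #S' ≤ 2 := hwt'
  have hunion := card_union_le S S'
  have hdisj : Disjoint S S' := card_union_eq_card_add_card.mp (by omega)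
  obtain ⟨i₁, i₂, h₁₂, hS₁₂⟩ := card_eq_two.mp (show #S = 2 by omega)
  obtain ⟨i₃, i₄, h₃₄, hS₃₄⟩ := card_eq_two.mp (show #S' = 2 by omega)
  refine ⟨i₁, i₂, i₃, i₄, ?_, hS₁₂, hS₃₄⟩
  change ([i₁, i₂] ++ [i₃, i₄]).Nodup
  refine List.nodup_append.mpr ⟨by simpa using h₁₂, by simpa using h₃₄, fun i hi i' hi' hii' => ?_⟩
  subst hii'
  exact disjoint_left.mp hdisj (by rw [hS₁₂]; simpa using hi) (by rw [hS₃₄]; simpa using hi')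

theorem sum_zsmul_triple {q p : ℕ} (e : Fin n → ℤ) (x : Fin n → ZMod p) :
    ∑ i, e i • ((1, x i, x i ^ 2) : ZMod q × ZMod p × ZMod p) =
      (((∑ i, e i : ℤ) : ZMod q), ∑ i, (e i : ZMod p) * x i, ∑ i, (e i : ZMod p) * x i ^ 2) := by
  ext <;> simp [Prod.fst_sum, Prod.snd_sum, zsmul_eq_mul]

theorem eq_of_sum_intCast_mul_pow_eq {p N : ℕ} [Fact p.Prime] {e e' : Fin n → ℤ}
    {x : Fin n → ZMod p} (hx : Function.Injective x) (hd : ∀ i, |e i - e' i| < p)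
    (hN : wt (e - e') ≤ N)
    (h : ∀ k < N, ∑ i, (e i : ZMod p) * x i ^ k = ∑ i, (e' i : ZMod p) * x i ^ k) : e = e' := by
  set s := univ.filter fun i => (e - e') i ≠ 0
  have hs := Finset.eq_zero_of_sum_mul_pow_eq_zero (s := s) (v := fun i => ((e - e') i : ZMod p))
    hx.injOn fun k hk => by
      rw [sum_filter_of_ne (p := fun i => (e - e') i ≠ 0)
        fun i _ hi h0 => hi (by rw [h0, Int.cast_zero, zero_mul])]
      simp only [Pi.sub_apply, Int.cast_sub, sub_mul, sum_sub_distrib]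
      exact sub_eq_zero.mpr (h k (hk.trans_le hN))
  funext i
  by_contra hi
  exact sub_ne_zero.mpr hi
    (eq_zero_of_abs_lt_of_intCast_eq_zero (hd i) (hs i (by simpa [s, sub_eq_zero] using hi)))

end Weights

section Injectivity

variable {D p : ℕ} [Fact p.Prime] {B K : ℤ}

local notation "ν" => digitValue p B

theorem false_of_three_lt_wt_sub {n q : ℕ} {kp km : ℤ} (hsq3 : ¬IsSquare (3 : ZMod p))
    (hkp : kp ∈ Icc 1 3) (hkm : km ∈ Icc 0 kp) (hK : 0 ≤ K) (hBp : B ^ D ≤ p)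
    (hαp : max (2 * kp ^ 2) 3 < (p : ℤ)) (hKB : max (2 * kp ^ 2) 3 * K < B)
    {y : Fin n → Fin D → ℤ} (hy : Function.Injective y) (hbox : ∀ i j, 0 ≤ y i j ∧ y i j ≤ K)
    {ρ : ℤ} (hsphere : ∀ i, y i ⬝ᵥ y i = ρ) {e e' : Fin n → ℤ}
    (he : ∀ i, -km ≤ e i ∧ e i ≤ kp) (hwt : wt e ≤ 2)
    (he' : ∀ i, -km ≤ e' i ∧ e' i ≤ kp) (hwt' : wt e' ≤ 2)
    (hsum : ∑ i, e i = ∑ i, e' i) (hd : 3 < wt (e - e'))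
    (h : ∑ i, e i • ((1, ν (y i), ν (y i) ^ 2) : ZMod q × ZMod p × ZMod p) =
      ∑ i, e' i • ((1, ν (y i), ν (y i) ^ 2) : ZMod q × ZMod p × ZMod p)) : False := by
  obtain ⟨i₁, i₂, i₃, i₄, hi, hS₁₂, hS₃₄⟩ := exists_support_eq_pair_of_three_lt_wt_sub hwt hwt' hd
  have ⟨h₁₂, h₃₄⟩ : i₁ ≠ i₂ ∧ i₃ ≠ i₄ := by simp at hi; tauto
  have hnz : ∀ i ∈ ({i₁, i₂} : Finset _), e i ≠ 0 := by
    rw [← hS₁₂]; exact fun i hi => (mem_filter.mp hi).2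
  have hnz' : ∀ i ∈ ({i₃, i₄} : Finset _), e' i ≠ 0 := by
    rw [← hS₃₄]; exact fun i hi => (mem_filter.mp hi).2
  have hcoef : ∀ w ∈ [e i₁, e i₂, e' i₃, e' i₄], w ≠ 0 ∧ w ∈ Icc (-km) kp := by
    simp only [List.mem_cons, List.not_mem_nil, or_false, forall_eq_or_imp, forall_eq, mem_Icc]
    exact ⟨⟨hnz i₁ (by simp), he i₁⟩, ⟨hnz i₂ (by simp), he i₂⟩, ⟨hnz' i₃ (by simp), he' i₃⟩,
      ⟨hnz' i₄ (by simp), he' i₄⟩⟩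
  have hsum' : e i₁ + e i₂ = e' i₃ + e' i₄ := by
    have h₁ := sum_zsmul_eq_of_support_eq_pair h₁₂ hS₁₂ fun _ => (1 : ℤ)
    have h₂ := sum_zsmul_eq_of_support_eq_pair h₃₄ hS₃₄ fun _ => (1 : ℤ)
    simp only [smul_eq_mul, mul_one] at h₁ h₂
    rw [← h₁, ← h₂, hsum]
  rw [sum_zsmul_eq_of_support_eq_pair h₁₂ hS₁₂, sum_zsmul_eq_of_support_eq_pair h₃₄ hS₃₄] at h
  exact false_of_four_points (ρ := ρ) hsq3 hkp hkm hK hBp hαp hKB (hi.map hy) (by simp [hbox])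
    (by simp [hsphere]) hcoef hsum' (by simpa [zsmul_eq_mul] using congrArg (fun v => v.2.1) h)
    (by simpa [zsmul_eq_mul] using congrArg (fun v => v.2.2) h)

theorem eq_of_sum_zsmul_eq {n q : ℕ} {kp km : ℤ} (hsq3 : ¬IsSquare (3 : ZMod p))
    (hkp : kp ∈ Icc 1 3) (hkm : km ∈ Icc 0 kp) (hq : 2 * (kp + km) < q) (hK : 0 ≤ K)
    (hBp : B ^ D ≤ p) (hαp : max (2 * kp ^ 2) 3 < (p : ℤ)) (hKB : max (2 * kp ^ 2) 3 * K < B)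
    {y : Fin n → Fin D → ℤ} (hy : Function.Injective y) (hbox : ∀ i j, 0 ≤ y i j ∧ y i j ≤ K)
    {ρ : ℤ} (hsphere : ∀ i, y i ⬝ᵥ y i = ρ) {e e' : Fin n → ℤ}
    (he : ∀ i, -km ≤ e i ∧ e i ≤ kp) (hwt : wt e ≤ 2)
    (he' : ∀ i, -km ≤ e' i ∧ e' i ≤ kp) (hwt' : wt e' ≤ 2)
    (h : ∑ i, e i • ((1, ν (y i), ν (y i) ^ 2) : ZMod q × ZMod p × ZMod p) =
      ∑ i, e' i • ((1, ν (y i), ν (y i) ^ 2) : ZMod q × ZMod p × ZMod p)) :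
    e = e' := by
  obtain ⟨hkp₁, hkp₃⟩ := mem_Icc.mp hkp
  obtain ⟨hkm₀, hkmkp⟩ := mem_Icc.mp hkm
  have hα : 2 * kp ^ 2 ≤ max (2 * kp ^ 2) 3 ∧ 3 ≤ max (2 * kp ^ 2) 3 :=
    ⟨le_max_left _ _, le_max_right _ _⟩
  have hcoords := h
  rw [sum_zsmul_triple, sum_zsmul_triple, Prod.mk.injEq, Prod.mk.injEq] at hcoords
  obtain ⟨hq', hlin, hquad⟩ := hcoords
  have hsum := sum_eq_sum_of_intCast_sum_eq (by omega) hkm₀ hq he hwt he' hwt' hq'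
  rcases le_or_gt (wt (e - e')) 3 with hd | hd
  · have hν : Function.Injective fun i => ν (y i) := fun i i' hii' =>
      hy (eq_of_digitValue_eq hBp (fun j => (abs_sub_le_of_nonneg_of_le (hbox i j).1
        (hbox i j).2 (hbox i' j).1 (hbox i' j).2).trans_lt (by nlinarith)) hii')
    refine eq_of_sum_intCast_mul_pow_eq hν (fun i => ?_) hd fun k hk => ?_
    · obtain ⟨h₁, h₁'⟩ := he i
      obtain ⟨h₂, h₂'⟩ := he' i
      rw [abs_lt]
      constructor <;> nlinarith
    · interval_cases k
      · simpa using congrArg (Int.cast : ℤ → ZMod p) hsum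
      · simpa using hlin
      · exact hquad
  · exact (false_of_three_lt_wt_sub hsq3 hkp hkm hK hBp hαp hKB hy hbox hsphere he hwt he' hwt'
      hsum hd h).elim

end Injectivity

theorem exists_digit_vectors {n D K m B p : ℕ} {x : Fin n → ℕ} (hx : Function.Injective x)
    (hrange : Set.range x = {y : ℕ | ∃ f : Fin D → ℕ, (∀ i, f i ≤ K) ∧ ∑ i, f i ^ 2 = m ∧
      y = ∑ i, f i * B ^ (i : ℕ)}) :
    ∃ y : Fin n → Fin D → ℤ, Function.Injective y ∧ (∀ i j, 0 ≤ y i j ∧ y i j ≤ K) ∧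
      (∀ i, y i ⬝ᵥ y i = m) ∧ ∀ i, (x i : ZMod p) = digitValue p B (y i) := by
  choose F hFK hFm hFx using fun i => hrange ▸ Set.mem_range_self (f := x) i
  refine ⟨fun i j => F i j, fun i i' h => hx ?_,
    fun i j => ⟨Int.natCast_nonneg _, Int.ofNat_le.mpr (hFK i j)⟩, fun i => ?_,
    fun i => by simp [digitValue, hFx i]⟩
  · have hF : F i = F i' := funext fun j => Nat.cast_injective (R := ℤ) (congrFun h j)
    rw [hFx i, hFx i', hF]
  · simp only [dotProduct, ← sq]
    exact_mod_cast hFm i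

theorem stmt13_general (kp km : ℕ) (hkm : km ≤ kp) (hkp : kp ≤ 3) (hk1 : 1 ≤ kp + km)
    (D K : ℕ) (hD : 2 ≤ D) (hK : 1 ≤ K)
    (p : ℕ) (hp : p.Prime) (hp12 : p % 12 = 5 ∨ p % 12 = 7)
    (hpD : (max (2 * kp ^ 2) 3 * K + 1) ^ D ≤ p)
    (m : ℕ)
    (n : ℕ) (x : Fin n → ℕ) (hx : Function.Injective x)
    (hrange : Set.range x =
      {y : ℕ | ∃ f : Fin D → ℕ, (∀ i, f i ≤ K) ∧ (∑ i, (f i) ^ 2) = m ∧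
        y = ∑ i, f i * (max (2 * kp ^ 2) 3 * K + 1) ^ (i : ℕ)}) :
    (∀ e : Fin n → ℤ, (∀ i, -(km : ℤ) ≤ e i ∧ e i ≤ kp) → 1 ≤ wt e → wt e ≤ 2 →
      (∑ i, e i • ((1, (x i : ZMod p), (x i : ZMod p) ^ 2) :
        ZMod (3 * kp + 2 * km + 1) × ZMod p × ZMod p)) ≠ 0) ∧
    (∀ e e' : Fin n → ℤ,
      (∀ i, -(km : ℤ) ≤ e i ∧ e i ≤ kp) → 1 ≤ wt e → wt e ≤ 2 →
      (∀ i, -(km : ℤ) ≤ e' i ∧ e' i ≤ kp) → 1 ≤ wt e' → wt e' ≤ 2 →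
      (∑ i, e i • ((1, (x i : ZMod p), (x i : ZMod p) ^ 2) :
        ZMod (3 * kp + 2 * km + 1) × ZMod p × ZMod p)) =
      (∑ i, e' i • ((1, (x i : ZMod p), (x i : ZMod p) ^ 2) :
        ZMod (3 * kp + 2 * km + 1) × ZMod p × ZMod p)) → e = e') := by
  have : Fact p.Prime := ⟨hp⟩
  set B : ℕ := max (2 * kp ^ 2) 3 * K + 1
  obtain ⟨y, hy, hbox, hsphere, hxy⟩ := exists_digit_vectors (p := p) hx hrange
  have hBp : ((B : ℕ) : ℤ) ^ D ≤ p := by exact_mod_cast hpD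
  have hKB : max (2 * (kp : ℤ) ^ 2) 3 * K < (B : ℤ) := by push_cast [B]; lia
  have hαp : max (2 * (kp : ℤ) ^ 2) 3 < (p : ℤ) := by
    have := pow_le_pow_right₀ (by omega : 1 ≤ (B : ℤ)) (by omega : 1 ≤ D)
    nlinarith
  set v : Fin n → ZMod (3 * kp + 2 * km + 1) × ZMod p × ZMod p :=
    fun i => (1, (x i : ZMod p), (x i : ZMod p) ^ 2)
  have hinj : ∀ e e' : Fin n → ℤ, (∀ i, -(km : ℤ) ≤ e i ∧ e i ≤ kp) → wt e ≤ 2 →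
      (∀ i, -(km : ℤ) ≤ e' i ∧ e' i ≤ kp) → wt e' ≤ 2 →
      ∑ i, e i • v i = ∑ i, e' i • v i → e = e' := fun e e' he hwt he' hwt' h =>
    eq_of_sum_zsmul_eq (q := 3 * kp + 2 * km + 1) (not_isSquare_three_of_mod_twelve hp12)
      (mem_Icc.mpr ⟨by omega, by omega⟩) (mem_Icc.mpr ⟨by omega, by omega⟩) (by push_cast; omega)
      (by positivity) hBp hαp hKB hy hbox hsphere he hwt he' hwt' (by simpa only [v, hxy] using h)
  refine ⟨fun e he _ hw h0 => ?_, fun e e' he _ hw he' _ hw' h => hinj e e' he hw he' hw' h⟩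
  obtain rfl := hinj e 0 he hw (fun _ => ⟨by simp, by simp⟩) (by simp [wt]) (by rw [h0]; simp)
  simp_all [wt]

theorem stmt13 (kp km : ℕ) (hkm : km ≤ kp) (hkp : kp ≤ 3) (hk1 : 1 ≤ kp + km)
    (D K : ℕ) (hD : 2 ≤ D) (hK : 1 ≤ K)
    (p : ℕ) (hp : p.Prime) (hp12 : p % 12 = 5 ∨ p % 12 = 7)
    (hpD : (max (2 * kp ^ 2) 3 * K + 1) ^ D ≤ p)
    (m : ℕ) (hm : m < D * K ^ 2)
    (n : ℕ) (x : Fin n → ℕ) (hx : Function.Injective x)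
    (hrange : Set.range x =
      {y : ℕ | ∃ f : Fin D → ℕ, (∀ i, f i ≤ K) ∧ (∑ i, (f i) ^ 2) = m ∧
        y = ∑ i, f i * (max (2 * kp ^ 2) 3 * K + 1) ^ (i : ℕ)}) :
    (∀ e : Fin n → ℤ, (∀ i, -(km : ℤ) ≤ e i ∧ e i ≤ kp) → 1 ≤ wt e → wt e ≤ 2 →
      (∑ i, e i • ((1, (x i : ZMod p), (x i : ZMod p) ^ 2) :
        ZMod (3 * kp + 2 * km + 1) × ZMod p × ZMod p)) ≠ 0) ∧
    (∀ e e' : Fin n → ℤ,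
      (∀ i, -(km : ℤ) ≤ e i ∧ e i ≤ kp) → 1 ≤ wt e → wt e ≤ 2 →
      (∀ i, -(km : ℤ) ≤ e' i ∧ e' i ≤ kp) → 1 ≤ wt e' → wt e' ≤ 2 →
      (∑ i, e i • ((1, (x i : ZMod p), (x i : ZMod p) ^ 2) :
        ZMod (3 * kp + 2 * km + 1) × ZMod p × ZMod p)) =
      (∑ i, e' i • ((1, (x i : ZMod p), (x i : ZMod p) ^ 2) :
        ZMod (3 * kp + 2 * km + 1) × ZMod p × ZMod p)) → e = e') :=
  stmt13_general kp km hkm hkp hk1 D K hD hK p hp hp12 hpD m n x hx hrange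
end

section
/- Let a, b, c be positive integers and x, y, z, u ∈ Z^D satisfy a x_i + b y_i + c z_i = (a+b+c) u_i for all i, and Σ_i x_i^2 = Σ_i y_i^2 = Σ_i z_i^2 = Σ_i u_i^2. Then x = y = z = u. -/
theorem stmt15 (D : ℕ) (a b c : ℤ) (ha : 0 < a) (hb : 0 < b) (hc : 0 < c)
    (x y z u : Fin D → ℤ)
    (h : ∀ i, a * x i + b * y i + c * z i = (a + b + c) * u i)
    (hx : ∑ i, (x i) ^ 2 = ∑ i, (u i) ^ 2)
    (hy : ∑ i, (y i) ^ 2 = ∑ i, (u i) ^ 2)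
    (hz : ∑ i, (z i) ^ 2 = ∑ i, (u i) ^ 2) :
    x = u ∧ y = u ∧ z = u := by
  have expand : ∀ i, a * (x i - u i) ^ 2 + b * (y i - u i) ^ 2 + c * (z i - u i) ^ 2
      = (a * (x i) ^ 2 + b * (y i) ^ 2 + c * (z i) ^ 2) - (a + b + c) * (u i) ^ 2 := by
    intro i
    linear_combination (-2 * u i) * (h i)
  have key : ∑ i, (a * (x i - u i) ^ 2 + b * (y i - u i) ^ 2 + c * (z i - u i) ^ 2) = 0 := by
    rw [Finset.sum_congr rfl fun i _ => expand i]
    simp only [Finset.sum_sub_distrib, Finset.sum_add_distrib, ← Finset.mul_sum]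
    rw [hx, hy, hz]; ring
  have hzero : ∀ i ∈ Finset.univ,
      a * (x i - u i) ^ 2 + b * (y i - u i) ^ 2 + c * (z i - u i) ^ 2 = 0 := by
    rw [← Finset.sum_eq_zero_iff_of_nonneg]
    · exact key
    · intro i _; positivity
  have hall : ∀ i : Fin D, x i = u i ∧ y i = u i ∧ z i = u i := by
    intro i
    have h0 := hzero i (Finset.mem_univ i)
    have hx0 : (x i - u i) ^ 2 = 0 := by nlinarith [sq_nonneg (x i - u i), sq_nonneg (y i - u i), sq_nonneg (z i - u i)]
    have hy0 : (y i - u i) ^ 2 = 0 := by nlinarith [sq_nonneg (x i - u i), sq_nonneg (y i - u i), sq_nonneg (z i - u i)]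
    have hz0 : (z i - u i) ^ 2 = 0 := by nlinarith [sq_nonneg (x i - u i), sq_nonneg (y i - u i), sq_nonneg (z i - u i)]
    refine ⟨?_, ?_, ?_⟩ <;> nlinarith [pow_eq_zero_iff (n := 2) (by norm_num) |>.mp hx0,
      pow_eq_zero_iff (n := 2) (by norm_num) |>.mp hy0,
      pow_eq_zero_iff (n := 2) (by norm_num) |>.mp hz0]
  exact ⟨funext fun i => (hall i).1, funext fun i => (hall i).2.1, funext fun i => (hall i).2.2⟩
end
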